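/- arXiv:1802.07561 — 4 statements merged into one kernel-verified Lean document; each statement's English description precedes it below -/
import Mathlib

section
/- If a function f : (0, ∞) → [0, ∞) satisfies max{f(x+y), a} = max{f(x), f(y)} for all x, y > 0, where a ≥ 0 is a constant, then f(z) = f(1) for every z > 0, and f(1) ≥ a. -/
/-!
Taking `x = y` shows `f ≥ a` on `(0, ∞)`, so the equation becomes `f (x + y) = max (f x) (f y)`.
Such an `f` is monotone (`f y = max (f x) (f (y - x))` for `x < y`) and satisfies
`f ((n + 1) • x) = f x`; since every `z > 0` lies below some multiple of `x`, this gives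
`f z ≤ f x`, and by symmetry `f` is constant.
-/

theorem le_map_of_max_map_add_eq_max {α β : Type*} [Add α] [Zero α] [LT α] [LinearOrder β]
    {f : α → β} {a : β} (hfe : ∀ x y : α, 0 < x → 0 < y → max (f (x + y)) a = max (f x) (f y))
    {x : α} (hx : 0 < x) : a ≤ f x :=
  calc a ≤ max (f (x + x)) a := le_max_right _ _
    _ = f x := by rw [hfe x x hx hx, max_self]

section MapAddEqMax

variable {α β : Type*} [AddCommGroup α] [LinearOrder α] [IsOrderedAddMonoid α] [LinearOrder β]
  {f : α → β}

theorem map_add_eq_max_of_max_map_add_eq_max {a : β}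
    (hfe : ∀ x y : α, 0 < x → 0 < y → max (f (x + y)) a = max (f x) (f y)) {x y : α}
    (hx : 0 < x) (hy : 0 < y) : f (x + y) = max (f x) (f y) := by
  rw [← hfe x y hx hy, max_eq_left (le_map_of_max_map_add_eq_max hfe (add_pos hx hy))]

theorem map_succ_nsmul_of_map_add_eq_max
    (hf : ∀ x y : α, 0 < x → 0 < y → f (x + y) = max (f x) (f y)) {x : α} (hx : 0 < x)
    (n : ℕ) : f ((n + 1) • x) = f x := by
  induction n with
  | zero => rw [zero_add, one_nsmul]
  | succ n ih => rw [succ_nsmul, hf _ _ (nsmul_pos hx n.succ_ne_zero) hx, ih, max_self]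

theorem monotoneOn_of_map_add_eq_max
    (hf : ∀ x y : α, 0 < x → 0 < y → f (x + y) = max (f x) (f y)) :
    MonotoneOn f (Set.Ioi 0) := by
  intro x hx y _ hxy
  rcases hxy.eq_or_lt with rfl | hlt
  · rfl
  · calc f x ≤ max (f x) (f (y - x)) := le_max_left _ _
      _ = f y := by rw [← hf _ _ hx (sub_pos.2 hlt), add_sub_cancel]

theorem map_eq_of_map_add_eq_max [Archimedean α]
    (hf : ∀ x y : α, 0 < x → 0 < y → f (x + y) = max (f x) (f y)) {x z : α} (hx : 0 < x)
    (hz : 0 < z) : f z = f x := by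
  have map_le : ∀ {x z : α}, 0 < x → 0 < z → f z ≤ f x := by
    intro x z hx hz
    obtain ⟨n, hn⟩ := Archimedean.arch z hx
    have hle : z ≤ (n + 1) • x := hn.trans (nsmul_le_nsmul_left hx.le n.le_succ)
    calc f z ≤ f ((n + 1) • x) :=
          monotoneOn_of_map_add_eq_max hf hz (Set.mem_Ioi.2 (hz.trans_le hle)) hle
      _ = f x := map_succ_nsmul_of_map_add_eq_max hf hx n
  exact le_antisymm (map_le hx hz) (map_le hz hx)

end MapAddEqMax

theorem linfty_cauchy_functional_equation_general (f : ℝ → ℝ) (a : ℝ)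
    (hfe : ∀ x y : ℝ, 0 < x → 0 < y → max (f (x + y)) a = max (f x) (f y)) :
    (∀ z : ℝ, 0 < z → f z = f 1) ∧ a ≤ f 1 := by
  have hadd : ∀ x y : ℝ, 0 < x → 0 < y → f (x + y) = max (f x) (f y) :=
    fun _ _ hx hy => map_add_eq_max_of_max_map_add_eq_max hfe hx hy
  exact ⟨fun _ hz => map_eq_of_map_add_eq_max hadd one_pos hz,
    le_map_of_max_map_add_eq_max hfe one_pos⟩

/-- Lemma 2.1 (`L_∞` Cauchy functional equation): if `f : (0,∞) → [0,∞)` satisfies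
`max (f (x+y)) a = max (f x) (f y)` for all `x, y > 0`, where `a ≥ 0`, then
`f z = f 1` for all `z > 0` and `f 1 ≥ a`. -/
theorem linfty_cauchy_functional_equation (f : ℝ → ℝ) (a : ℝ) (ha : 0 ≤ a)
    (hnonneg : ∀ x : ℝ, 0 < x → 0 ≤ f x)
    (hfe : ∀ x y : ℝ, 0 < x → 0 < y → max (f (x + y)) a = max (f x) (f y)) :
    (∀ z : ℝ, 0 < z → f z = f 1) ∧ a ≤ f 1 :=
  linfty_cauchy_functional_equation_general f a hfe
end

section
/- Let n ≥ 3. If Z : T_o^n → K_o^n is an SL(n) contravariant L_∞ Minkowski valuation, then ZT = {o} for every simplex T ∈ T_o^n with dim T < n. -/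
open scoped RealInnerProductSpace BigOperators Pointwise ENNReal
open MeasureTheory Filter Matrix

noncomputable section

/-- `Euc n` is Euclidean space `ℝ^n`. -/
abbrev Euc (n : ℕ) := EuclideanSpace ℝ (Fin n)

/-- A convex body in `ℝ^n` containing the origin: a nonempty compact convex set with `0 ∈ K`. -/
def IsConvexBody0 {n : ℕ} (K : Set (Euc n)) : Prop :=
  IsCompact K ∧ Convex ℝ K ∧ (0 : Euc n) ∈ K

/-- A convex polytope in `ℝ^n` containing the origin. -/
def IsPolytope0 {n : ℕ} (P : Set (Euc n)) : Prop :=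
  (∃ S : Finset (Euc n), P = convexHull ℝ (S : Set (Euc n))) ∧ (0 : Euc n) ∈ P

/-- The support function `h_K(x) = sup { ⟪x, y⟫ : y ∈ K }`. -/
def supp {n : ℕ} (K : Set (Euc n)) (x : Euc n) : ℝ :=
  sSup ((fun y => ⟪x, y⟫) '' K)

/-- The image of a set under the linear map induced by a matrix. -/
def matAct {n : ℕ} (A : Matrix (Fin n) (Fin n) ℝ) (K : Set (Euc n)) : Set (Euc n) :=
  (Matrix.toEuclideanLin A) '' K

/-- The vector `A x`. -/
def matVec {n : ℕ} (A : Matrix (Fin n) (Fin n) ℝ) (x : Euc n) : Euc n :=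
  Matrix.toEuclideanLin A x

/-- The dimension of a set: the dimension of (the direction of) its affine hull. -/
def sdim {n : ℕ} (P : Set (Euc n)) : ℕ :=
  Module.finrank ℝ (affineSpan ℝ P).direction

/-- A simplex having the origin as one of its vertices. -/
def IsSimplex0 {n : ℕ} (T : Set (Euc n)) : Prop :=
  ∃ (d : ℕ) (v : Fin d → Euc n),
    AffineIndependent ℝ (Fin.cons (0 : Euc n) v : Fin (d + 1) → Euc n) ∧
    T = convexHull ℝ (Set.range (Fin.cons (0 : Euc n) v : Fin (d + 1) → Euc n))

lemma euc_inner_eq {n : ℕ} (x y : Euc n) : ⟪x, y⟫ = ∑ i, x i * y i := by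
  simp [PiLp.inner_apply, RCLike.inner_apply]
  exact Finset.sum_congr rfl fun i _ => mul_comm _ _

lemma matVec_apply {n : ℕ} (A : Matrix (Fin n) (Fin n) ℝ) (x : Euc n) (i : Fin n) :
    (Matrix.toEuclideanLin A x) i = ∑ j, A i j * x j := rfl

/-- Membership in the convex hull of `0, v 0, ..., v (d-1)`. -/
lemma mem_chull_iff {n d : ℕ} (v : Fin d → Euc n) (x : Euc n) :
    x ∈ convexHull ℝ (Set.range (Fin.cons 0 v : Fin (d+1) → Euc n)) ↔
      ∃ c : Fin d → ℝ, (∀ i, 0 ≤ c i) ∧ (∑ i, c i) ≤ 1 ∧ x = ∑ i, c i • v i := by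
  constructor
  · intro hx
    have hsub : convexHull ℝ (Set.range (Fin.cons 0 v : Fin (d+1) → Euc n)) ⊆
        {x : Euc n | ∃ c : Fin d → ℝ, (∀ i, 0 ≤ c i) ∧ (∑ i, c i) ≤ 1 ∧ x = ∑ i, c i • v i} := by
      apply convexHull_min
      · rintro y ⟨i, rfl⟩
        refine Fin.cases ?_ (fun j => ?_) i
        · exact ⟨0, fun _ => le_refl _, by simp, by simp⟩
        · refine ⟨Pi.single j 1, fun i => ?_, ?_, ?_⟩
          · by_cases h : i = j <;> simp [h, Pi.single_apply]
          · simp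
          · simp [Pi.single_apply, ite_smul]
      · rintro y ⟨cy, hy0, hy1, rfl⟩ z ⟨cz, hz0, hz1, rfl⟩ a b ha hb hab
        refine ⟨fun i => a * cy i + b * cz i, fun i => add_nonneg (mul_nonneg ha (hy0 i)) (mul_nonneg hb (hz0 i)), ?_, ?_⟩
        · calc ∑ i, (a * cy i + b * cz i) = a * ∑ i, cy i + b * ∑ i, cz i := by
                rw [Finset.sum_add_distrib, Finset.mul_sum, Finset.mul_sum]
            _ ≤ a * 1 + b * 1 := by
                gcongr
            _ = 1 := by linarith
        · rw [Finset.smul_sum, Finset.smul_sum, ← Finset.sum_add_distrib]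
          exact Finset.sum_congr rfl fun i _ => by
            rw [add_smul, mul_smul, mul_smul]
    exact hsub hx
  · rintro ⟨c, hc0, hc1, rfl⟩
    have := Convex.sum_mem (t := (Finset.univ : Finset (Fin (d+1))))
      (convex_convexHull ℝ (Set.range (Fin.cons 0 v : Fin (d+1) → Euc n)))
      (w := Fin.cons (1 - ∑ i, c i) c) (z := Fin.cons 0 v)
      (fun i _ => ?_) ?_ (fun i _ => subset_convexHull _ _ ⟨i, rfl⟩)
    · rw [Fin.sum_univ_succ] at this
      simpa using this
    · refine Fin.cases ?_ (fun j => ?_) i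
      · simp; linarith
      · simpa using hc0 j
    · rw [Fin.sum_cons]; ring

/-- Affine independence of `(0, v)` is linear independence of `v`. -/
lemma affcons_iff {n d : ℕ} (v : Fin d → Euc n) :
    AffineIndependent ℝ (Fin.cons (0:Euc n) v : Fin (d+1) → Euc n) ↔ LinearIndependent ℝ v := by
  let e : Fin d ≃ {x : Fin (d+1) // x ≠ 0} :=
    { toFun := fun i => ⟨i.succ, Fin.succ_ne_zero i⟩
      invFun := fun x => (x : Fin (d+1)).pred x.2
      left_inv := fun i => by simp
      right_inv := fun x => by simp }
  have key : (fun (i : {x : Fin (d+1) // x ≠ 0}) =>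
      (Fin.cons (0:Euc n) v : Fin (d+1) → Euc n) ↑i -ᵥ
        (Fin.cons (0:Euc n) v : Fin (d+1) → Euc n) 0) ∘ e = v := by
    funext i; simp [e]
  rw [affineIndependent_iff_linearIndependent_vsub ℝ _ 0, ← linearIndependent_equiv e, key]

/-- The dimension of the simplex `conv(0, v)`. -/
lemma sdim_chull {n d : ℕ} (v : Fin d → Euc n) (hv : LinearIndependent ℝ v) :
    sdim (convexHull ℝ (Set.range (Fin.cons (0:Euc n) v : Fin (d+1) → Euc n))) = d := by
  unfold sdim
  rw [affineSpan_convexHull, direction_affineSpan]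
  have h1 : vectorSpan ℝ (Set.range (Fin.cons (0:Euc n) v : Fin (d+1) → Euc n)) =
      Submodule.span ℝ (Set.range v) := by
    have h0 : (0:Euc n) ∈ Set.range (Fin.cons (0:Euc n) v : Fin (d+1) → Euc n) := ⟨0, rfl⟩
    have hr : Set.range (Fin.cons (0:Euc n) v : Fin (d+1) → Euc n)
        = insert (0:Euc n) (Set.range v) := Fin.range_cons _ _
    apply le_antisymm
    · rw [vectorSpan_def]
      apply Submodule.span_le.2
      rintro z ⟨a, ha, b, hb, rfl⟩
      rw [hr] at ha hb
      have hva : a ∈ Submodule.span ℝ (Set.range v) := by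
        rcases ha with rfl | ha
        · exact Submodule.zero_mem _
        · exact Submodule.subset_span ha
      have hvb : b ∈ Submodule.span ℝ (Set.range v) := by
        rcases hb with rfl | hb
        · exact Submodule.zero_mem _
        · exact Submodule.subset_span hb
      exact sub_mem hva hvb
    · apply Submodule.span_le.2
      rintro z ⟨i, rfl⟩
      have : v i -ᵥ (0:Euc n) ∈ Set.range (Fin.cons (0:Euc n) v : Fin (d+1) → Euc n) -ᵥ
          Set.range (Fin.cons (0:Euc n) v : Fin (d+1) → Euc n) := by
        exact Set.vsub_mem_vsub ⟨i.succ, by simp⟩ h0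
      rw [vectorSpan_def]
      simpa using Submodule.subset_span this
  rw [h1, finrank_span_eq_card hv, Fintype.card_fin]

/-- Image of a simplex under an injective linear map is a simplex. -/
lemma simplex_image {n : ℕ} (f : Euc n →ₗ[ℝ] Euc n) (hf : Function.Injective f)
    {T : Set (Euc n)} (hT : IsSimplex0 T) : IsSimplex0 (f '' T) := by
  obtain ⟨d, v, haff, rfl⟩ := hT
  refine ⟨d, f ∘ v, ?_, ?_⟩
  · rw [affcons_iff]
    exact ((affcons_iff v).1 haff).map' f (LinearMap.ker_eq_bot.2 hf)
  · rw [LinearMap.image_convexHull, ← Set.range_comp, Fin.comp_cons, map_zero]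

/-- Inner product against transposed matrix action. -/
lemma inner_matVec_transpose {n : ℕ} (M : Matrix (Fin n) (Fin n) ℝ) (x z : Euc n) :
    ⟪Matrix.toEuclideanLin Mᵀ x, z⟫ = ⟪x, Matrix.toEuclideanLin M z⟫ := by
  rw [euc_inner_eq, euc_inner_eq]
  simp only [matVec_apply, Matrix.transpose_apply]
  have lhs : ∀ i : Fin n, (∑ j : Fin n, M j i * x j) * z i = ∑ j : Fin n, x j * (M j i * z i) :=
    fun i => by rw [Finset.sum_mul]; exact Finset.sum_congr rfl fun j _ => by ring
  have rhs : ∀ j : Fin n, x j * (∑ i : Fin n, M j i * z i) = ∑ i : Fin n, x j * (M j i * z i) :=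
    fun j => by rw [Finset.mul_sum]
  simp_rw [lhs, rhs]
  exact Finset.sum_comm

/-- Vectors with equal inner products against a basis are equal. -/
lemma eq_of_inner_basis {n m : ℕ} (B : Module.Basis (Fin m) ℝ (Euc n)) (x y : Euc n)
    (h : ∀ i, ⟪x, B i⟫ = ⟪y, B i⟫) : x = y := by
  have hz : ∀ z : Euc n, ⟪x - y, z⟫ = 0 := by
    intro z
    have hzmem : z ∈ Submodule.span ℝ (Set.range ⇑B) := by
      rw [B.span_eq]; trivial
    induction hzmem using Submodule.span_induction with
    | mem z hzr => obtain ⟨i, rfl⟩ := hzr; rw [inner_sub_left, h i]; ring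
    | zero => exact inner_zero_right _
    | add a b _ _ ha hb => rw [inner_add_right, ha, hb]; ring
    | smul c a _ ha => rw [real_inner_smul_right, ha]; ring
  have := hz (x - y)
  rw [inner_self_eq_zero] at this
  exact sub_eq_zero.1 this

/-- Key shear-invariance consequence: if `e ≠ 0` is orthogonal to all vertices of the
simplex and to `w`, then `⟪w, y⟫ = 0` for all `y ∈ Z T`. -/
lemma shear_perp (n : ℕ) (Z : Set (Euc n) → Set (Euc n))
    (hbody : ∀ T : Set (Euc n), IsSimplex0 T → IsConvexBody0 (Z T))
    (hcontra : ∀ (φ : Matrix.SpecialLinearGroup (Fin n) ℝ) (T : Set (Euc n)), IsSimplex0 T →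
      Z (matAct (φ : Matrix (Fin n) (Fin n) ℝ) T)
        = matAct (((φ⁻¹ : Matrix.SpecialLinearGroup (Fin n) ℝ) : Matrix (Fin n) (Fin n) ℝ))ᵀ (Z T))
    {d : ℕ} (v : Fin d → Euc n)
    (haff : AffineIndependent ℝ (Fin.cons (0:Euc n) v : Fin (d+1) → Euc n))
    (e w : Euc n) (he0 : e ≠ 0) (hev : ∀ i, ⟪e, v i⟫ = 0) (hew : ⟪e, w⟫ = 0) :
    ∀ y ∈ Z (convexHull ℝ (Set.range (Fin.cons (0:Euc n) v : Fin (d+1) → Euc n))), ⟪w, y⟫ = 0 := by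
  set T := convexHull ℝ (Set.range (Fin.cons (0:Euc n) v : Fin (d+1) → Euc n)) with hTdef
  have hT : IsSimplex0 T := ⟨d, v, haff, rfl⟩
  have heT : ∀ x ∈ T, ⟪e, x⟫ = 0 := by
    intro x hx
    have hsub : T ⊆ {x : Euc n | ⟪e, x⟫ = 0} := by
      apply convexHull_min
      · rintro y ⟨i, rfl⟩
        refine Fin.cases ?_ (fun j => ?_) i
        · simp
        · simpa using hev j
      · intro a ha b hb s t hs ht hst
        simp only [Set.mem_setOf_eq] at *
        rw [inner_add_right, real_inner_smul_right, real_inner_smul_right, ha, hb]; ring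
    exact hsub hx
  have hew' : ∑ i, e i * w i = 0 := by rw [← euc_inner_eq]; exact hew
  -- key invariance
  have key : ∀ t : ℝ, ∀ y ∈ Z T, y - (t * ⟪w, y⟫) • e ∈ Z T := by
    intro t y hy
    set M : Matrix (Fin n) (Fin n) ℝ :=
      Matrix.vecMulVec (fun i => t * w i) (fun i => e i) with hM
    have hMij : ∀ i j, M i j = t * w i * e j := fun i j => by
      rw [hM, Matrix.vecMulVec_apply]
    have hdetA : (1 + M).det = 1 := by
      rw [hM, Matrix.vecMulVec_eq (Fin 1), Matrix.det_one_add_replicateCol_mul_replicateRow]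
      have hd : (fun i => e i) ⬝ᵥ (fun i => t * w i) = 0 := by
        simp only [dotProduct]
        calc ∑ i, e i * (t * w i) = t * ∑ i, e i * w i := by
              rw [Finset.mul_sum]; exact Finset.sum_congr rfl fun i _ => by ring
          _ = 0 := by rw [hew']; ring
      rw [hd, add_zero]
    have hMM : M * M = 0 := by
      ext i j
      rw [Matrix.mul_apply]
      simp only [hMij, Matrix.zero_apply]
      calc ∑ k, t * w i * e k * (t * w k * e j)
          = (t * w i) * (t * e j) * ∑ k, e k * w k := by
            rw [Finset.mul_sum]; exact Finset.sum_congr rfl fun k _ => by ring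
        _ = 0 := by rw [hew']; ring
    have hAB : (1 + M) * (1 - M) = 1 := by
      have h2 : (1 + M) * (1 - M) = 1 - M * M := by noncomm_ring
      rw [h2, hMM, sub_zero]
    have hdetB : (1 - M).det = 1 := by
      have := congrArg Matrix.det hAB
      rw [Matrix.det_mul, hdetA, one_mul, Matrix.det_one] at this
      exact this
    set φ : Matrix.SpecialLinearGroup (Fin n) ℝ := ⟨1 + M, hdetA⟩ with hφ
    have hφinv : (φ⁻¹ : Matrix.SpecialLinearGroup (Fin n) ℝ) = ⟨1 - M, hdetB⟩ := by
      apply inv_eq_of_mul_eq_one_right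
      apply Subtype.ext
      exact hAB
    have hfix : matAct (1 + M) T = T := by
      have hfx : ∀ x ∈ T, Matrix.toEuclideanLin (1 + M) x = x := by
        intro x hx
        have hex : ∑ j, e j * x j = 0 := by rw [← euc_inner_eq]; exact heT x hx
        refine PiLp.ext fun i => ?_
        rw [matVec_apply]
        calc ∑ j, (1 + M) i j * x j
            = (∑ j, (1 : Matrix (Fin n) (Fin n) ℝ) i j * x j) + ∑ j, M i j * x j := by
              rw [← Finset.sum_add_distrib]
              exact Finset.sum_congr rfl fun j _ => by rw [Matrix.add_apply, add_mul]
          _ = x i + (t * w i) * ∑ j, e j * x j := by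
              congr 1
              · simp [Matrix.one_apply, ite_mul]
              · rw [Finset.mul_sum]; exact Finset.sum_congr rfl fun j _ => by rw [hMij]; ring
          _ = x i := by rw [hex]; ring
      rw [matAct]
      rw [Set.image_congr (g := id) (fun x hx => hfx x hx), Set.image_id]
    have h1 := hcontra φ T hT
    rw [hφinv] at h1
    have h2 : Z T = matAct (1 - M)ᵀ (Z T) := by
      rw [← h1]
      exact congrArg Z hfix.symm
    have hyim : Matrix.toEuclideanLin (1 - M)ᵀ y ∈ Z T := by
      rw [h2]; exact Set.mem_image_of_mem _ hy
    have hwy : ∑ j, w j * y j = ⟪w, y⟫ := (euc_inner_eq w y).symm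
    have heval : Matrix.toEuclideanLin (1 - M)ᵀ y = y - (t * ⟪w, y⟫) • e := by
      refine PiLp.ext fun i => ?_
      rw [matVec_apply]
      have : ∀ j, (1 - M)ᵀ i j * y j = (1 : Matrix (Fin n) (Fin n) ℝ) j i * y j
          - t * e i * (w j * y j) := by
        intro j
        rw [Matrix.transpose_apply, Matrix.sub_apply, hMij, sub_mul]
        ring_nf
      rw [Finset.sum_congr rfl (fun j _ => this j), Finset.sum_sub_distrib]
      have h3 : ∑ j, (1 : Matrix (Fin n) (Fin n) ℝ) j i * y j = y i := by
        simp [Matrix.one_apply, ite_mul]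
      have h4 : ∑ j, t * e i * (w j * y j) = t * e i * ⟪w, y⟫ := by
        rw [← Finset.mul_sum, hwy]
      rw [h3, h4]
      simp only [PiLp.sub_apply, PiLp.smul_apply, smul_eq_mul]
      ring
    rw [← heval]
    exact hyim
  -- boundedness gives the conclusion
  intro y hy
  by_contra hc
  obtain ⟨hcomp, hconv, h0⟩ := hbody T hT
  obtain ⟨C, hC⟩ := isBounded_iff_forall_norm_le.1 hcomp.isBounded
  have hC0 : 0 ≤ C := by simpa using hC 0 h0
  have hne : ‖e‖ ≠ 0 := by simpa using he0
  have hepos : 0 < ‖e‖ := lt_of_le_of_ne (norm_nonneg e) (Ne.symm hne)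
  set c := ⟪w, y⟫ with hcdef
  set s := (C + 1 + ‖y‖) / ‖e‖ with hsdef
  have hspos : 0 < s := by positivity
  have hz := key (s / c) y hy
  have htc : s / c * c = s := div_mul_cancel₀ s hc
  rw [← hcdef, htc] at hz
  have hzle := hC _ hz
  have hnorm : ‖y - s • e‖ ≥ s * ‖e‖ - ‖y‖ := by
    have h5 : ‖y - s • e‖ = ‖s • e - y‖ := norm_sub_rev _ _
    have h6 : ‖s • e‖ - ‖y‖ ≤ ‖s • e - y‖ := norm_sub_norm_le _ _
    have h7 : ‖s • e‖ = s * ‖e‖ := by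
      rw [norm_smul, Real.norm_eq_abs, abs_of_pos hspos]
    linarith
  have h8 : s * ‖e‖ = C + 1 + ‖y‖ := div_mul_cancel₀ _ hne
  have hyn : 0 ≤ ‖y‖ := norm_nonneg y
  linarith

/-- The easy case: `Z T = {0}` for simplices of dimension at most `n - 2`. -/
lemma Z_small (n : ℕ) (Z : Set (Euc n) → Set (Euc n))
    (hbody : ∀ T : Set (Euc n), IsSimplex0 T → IsConvexBody0 (Z T))
    (hcontra : ∀ (φ : Matrix.SpecialLinearGroup (Fin n) ℝ) (T : Set (Euc n)), IsSimplex0 T →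
      Z (matAct (φ : Matrix (Fin n) (Fin n) ℝ) T)
        = matAct (((φ⁻¹ : Matrix.SpecialLinearGroup (Fin n) ℝ) : Matrix (Fin n) (Fin n) ℝ))ᵀ (Z T))
    {d : ℕ} (v : Fin d → Euc n)
    (haff : AffineIndependent ℝ (Fin.cons (0:Euc n) v : Fin (d+1) → Euc n))
    (hdn : d + 1 < n) :
    Z (convexHull ℝ (Set.range (Fin.cons (0:Euc n) v : Fin (d+1) → Euc n))) = {(0 : Euc n)} := by
  set T := convexHull ℝ (Set.range (Fin.cons (0:Euc n) v : Fin (d+1) → Euc n)) with hTdef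
  have hT : IsSimplex0 T := ⟨d, v, haff, rfl⟩
  obtain ⟨hcomp, hconv, h0⟩ := hbody T hT
  refine Set.eq_singleton_iff_unique_mem.2 ⟨h0, ?_⟩
  intro y hy
  have hv : LinearIndependent ℝ v := (affcons_iff v).1 haff
  set W : Submodule ℝ (Euc n) :=
    Submodule.span ℝ (Set.range v) ⊔ Submodule.span ℝ {y} with hW
  have hWrank : Module.finrank ℝ W < n := by
    have h1 : Module.finrank ℝ W ≤ Module.finrank ℝ (Submodule.span ℝ (Set.range v))
        + Module.finrank ℝ (Submodule.span ℝ ({y} : Set (Euc n))) :=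
      Submodule.finrank_add_le_finrank_add_finrank _ _
    have h2 : Module.finrank ℝ (Submodule.span ℝ (Set.range v)) = d := by
      rw [finrank_span_eq_card hv, Fintype.card_fin]
    have h3 : Module.finrank ℝ (Submodule.span ℝ ({y} : Set (Euc n))) ≤ 1 := by
      by_cases hy0 : y = 0
      · subst hy0
        rw [Submodule.span_zero_singleton]
        simp
      · rw [finrank_span_singleton hy0]
    omega
  have hbot : Wᗮ ≠ ⊥ := by
    intro hcon
    have := Submodule.finrank_add_finrank_orthogonal W
    rw [hcon, finrank_bot, finrank_euclideanSpace_fin, add_zero] at this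
    omega
  obtain ⟨e, heW, he0⟩ := Submodule.exists_mem_ne_zero_of_ne_bot hbot
  have hmem := (Submodule.mem_orthogonal' W e).1 heW
  have hev : ∀ i, ⟪e, v i⟫ = 0 := fun i =>
    hmem (v i) (Submodule.mem_sup_left (Submodule.subset_span ⟨i, rfl⟩))
  have hey : ⟪e, y⟫ = 0 :=
    hmem y (Submodule.mem_sup_right (Submodule.subset_span rfl))
  have := shear_perp n Z hbody hcontra v haff e y he0 hev hey y hy
  exact inner_self_eq_zero.1 this

lemma sum_split {M : Type*} [AddCommMonoid M] {d' : ℕ} (F : Fin (d'+2) → M) :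
    ∑ i, F i = F 0 + F 1 + ∑ j : Fin d', F (Fin.succ (Fin.succ j)) := by
  rw [Fin.sum_univ_succ, Fin.sum_univ_succ, ← add_assoc]
  norm_num [Fin.succ_zero_eq_one]

lemma sum_split1 {M : Type*} [AddCommMonoid M] {d' : ℕ} (F : Fin (d'+1) → M) :
    ∑ i, F i = F 0 + ∑ j : Fin d', F (Fin.succ j) := Fin.sum_univ_succ F

lemma ssucc_ne_zero {d' : ℕ} (j : Fin d') : (Fin.succ (Fin.succ j) : Fin (d'+2)) ≠ 0 :=
  Fin.succ_ne_zero _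

lemma ssucc_ne_one {d' : ℕ} (j : Fin d') : (Fin.succ (Fin.succ j) : Fin (d'+2)) ≠ 1 := by
  simp only [Fin.ne_iff_vne, Fin.val_succ, Fin.val_one]
  omega

lemma cons2_one {X : Type*} {d' : ℕ} (a bb : X) (r : Fin d' → X) :
    (Fin.cons a (Fin.cons bb r) : Fin (d'+2) → X) 1 = bb := by
  rw [← Fin.succ_zero_eq_one, Fin.cons_succ, Fin.cons_zero]

lemma cons2_ssucc {X : Type*} {d' : ℕ} (a bb : X) (r : Fin d' → X) (j : Fin d') :
    (Fin.cons a (Fin.cons bb r) : Fin (d'+2) → X) (Fin.succ (Fin.succ j)) = r j := by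
  rw [Fin.cons_succ, Fin.cons_succ]

set_option maxHeartbeats 3000000 in
/-- The main case: simplices of dimension `n - 1`. -/
lemma Z_main (n : ℕ) (Z : Set (Euc n) → Set (Euc n))
    (hbody : ∀ T : Set (Euc n), IsSimplex0 T → IsConvexBody0 (Z T))
    (hval : ∀ K L : Set (Euc n), IsSimplex0 K → IsSimplex0 L → IsSimplex0 (K ∪ L) →
      IsSimplex0 (K ∩ L) →
      convexHull ℝ (Z (K ∪ L) ∪ Z (K ∩ L)) = convexHull ℝ (Z K ∪ Z L))
    (hcontra : ∀ (φ : Matrix.SpecialLinearGroup (Fin n) ℝ) (T : Set (Euc n)), IsSimplex0 T →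
      Z (matAct (φ : Matrix (Fin n) (Fin n) ℝ) T)
        = matAct (((φ⁻¹ : Matrix.SpecialLinearGroup (Fin n) ℝ) : Matrix (Fin n) (Fin n) ℝ))ᵀ (Z T))
    {d' : ℕ} (hn : d' + 3 = n) (v : Fin (d'+2) → Euc n)
    (haff : AffineIndependent ℝ (Fin.cons (0:Euc n) v : Fin (d'+3) → Euc n)) :
    Z (convexHull ℝ (Set.range (Fin.cons (0:Euc n) v : Fin (d'+3) → Euc n))) = {(0:Euc n)} := by
  set T := convexHull ℝ (Set.range (Fin.cons (0:Euc n) v : Fin (d'+3) → Euc n)) with hTdef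
  have hT : IsSimplex0 T := ⟨d'+2, v, haff, rfl⟩
  obtain ⟨hcomp, hconv, h0⟩ := hbody T hT
  have hv : LinearIndependent ℝ v := (affcons_iff v).1 haff
  -- a nonzero vector orthogonal to the span of the vertices
  set W : Submodule ℝ (Euc n) := Submodule.span ℝ (Set.range v) with hW
  have hbot : Wᗮ ≠ ⊥ := by
    intro hcon
    have h1 := Submodule.finrank_add_finrank_orthogonal W
    rw [hcon, finrank_bot, finrank_euclideanSpace_fin, add_zero, hW,
      finrank_span_eq_card hv, Fintype.card_fin] at h1
    omega
  obtain ⟨e, heW, he0⟩ := Submodule.exists_mem_ne_zero_of_ne_bot hbot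
  have hmem := (Submodule.mem_orthogonal' W e).1 heW
  have hev : ∀ i, ⟪e, v i⟫ = 0 := fun i => hmem (v i) (Submodule.subset_span ⟨i, rfl⟩)
  have hee : ⟪e, e⟫ ≠ 0 := fun h => he0 (inner_self_eq_zero.1 h)
  -- every element of Z T lies on the line through e
  have hline : ∀ y ∈ Z T, ∃ c : ℝ, y = c • e := by
    intro y hy
    set c := ⟪e, y⟫ / ⟪e, e⟫ with hc
    set w := y - c • e with hwdef
    have hew : ⟪e, w⟫ = 0 := by
      rw [hwdef, inner_sub_right, real_inner_smul_right, hc, div_mul_cancel₀ _ hee]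
      ring
    have hwy := shear_perp n Z hbody hcontra v haff e w he0 hev hew y hy
    have hwe : ⟪w, e⟫ = 0 := by rw [real_inner_comm]; exact hew
    have hww : ⟪w, w⟫ = 0 := by
      rw [hwdef, inner_sub_right, real_inner_smul_right]
      rw [← hwdef, hwy, hwe]; ring
    have : w = 0 := inner_self_eq_zero.1 hww
    exact ⟨c, by rw [← sub_eq_zero, ← hwdef, this]⟩
  -- the basis (e, v 0, ..., v (d'+1))
  set b : Fin (d'+3) → Euc n := Fin.cons e v with hbdef
  have henotmem : e ∉ Submodule.span ℝ (Set.range v) := by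
    intro hcon
    exact hee (hmem e hcon)
  have hbLI : LinearIndependent ℝ b := by
    rw [hbdef]
    exact linearIndependent_fin_cons.2 ⟨hv, henotmem⟩
  have hcard : Fintype.card (Fin (d'+3)) = Module.finrank ℝ (Euc n) := by
    rw [Fintype.card_fin, finrank_euclideanSpace_fin]; omega
  set B : Module.Basis (Fin (d'+3)) ℝ (Euc n) := basisOfLinearIndependentOfCardEqFinrank hbLI hcard
    with hBdef
  have hB : ⇑B = b := coe_basisOfLinearIndependentOfCardEqFinrank hbLI hcard
  have hB0 : B 0 = e := by rw [show B 0 = b 0 from congrFun hB 0, hbdef]; rfl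
  have hBs : ∀ j : Fin (d'+2), B (Fin.succ j) = v j := fun j => by
    rw [show B (Fin.succ j) = b (Fin.succ j) from congrFun hB _, hbdef, Fin.cons_succ]
  -- the central construction
  have main_construct : ∀ p q : Fin (d'+2), p ≠ q →
      Z (convexHull ℝ (Set.range (Fin.cons (0:Euc n)
          (Function.update v q (((1:ℝ)/2) • (v p + v q))) : Fin (d'+3) → Euc n)))
        = (fun y : Euc n => ((1:ℝ)/2) • y) '' (Z T) ∧
      IsSimplex0 (convexHull ℝ (Set.range (Fin.cons (0:Euc n)
          (Function.update v q (((1:ℝ)/2) • (v p + v q))) : Fin (d'+3) → Euc n))) := by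
    intro p q hpq
    set mm : Euc n := ((1:ℝ)/2) • (v p + v q) with hmm
    set iq : Fin (d'+3) := Fin.succ q with hiq
    set ip : Fin (d'+3) := Fin.succ p with hip
    have hipq : ip ≠ iq := fun h => hpq (Fin.succ_injective _ (by rwa [← hip, ← hiq]))
    have hiq0 : iq ≠ 0 := Fin.succ_ne_zero q
    set tf : Fin (d'+3) → Euc n :=
      Function.update (Function.update b iq mm) 0 ((2:ℝ) • e) with htf
    set tg : Fin (d'+3) → Euc n :=
      Function.update (Function.update b iq ((2:ℝ) • v q - v p)) 0 (((1:ℝ)/2) • e) with htg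
    set f : Euc n →ₗ[ℝ] Euc n := B.constr ℝ tf with hf
    set g : Euc n →ₗ[ℝ] Euc n := B.constr ℝ tg with hg
    have htf0 : tf 0 = (2:ℝ) • e := Function.update_self _ _ _
    have htg0 : tg 0 = ((1:ℝ)/2) • e := Function.update_self _ _ _
    have htfs : ∀ j : Fin (d'+2), tf (Fin.succ j) = Function.update v q mm j := by
      intro j
      rw [htf, Function.update_of_ne (Fin.succ_ne_zero j)]
      by_cases hjq : j = q
      · subst hjq; rw [← hiq, Function.update_self, Function.update_self]
      · have h1 : Fin.succ j ≠ iq := by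
          rw [hiq]; exact fun h => hjq (Fin.succ_injective _ h)
        rw [Function.update_of_ne h1, hbdef, Fin.cons_succ, Function.update_of_ne hjq]
    have htgs : ∀ j : Fin (d'+2),
        tg (Fin.succ j) = Function.update v q ((2:ℝ) • v q - v p) j := by
      intro j
      rw [htg, Function.update_of_ne (Fin.succ_ne_zero j)]
      by_cases hjq : j = q
      · subst hjq; rw [← hiq, Function.update_self, Function.update_self]
      · have h1 : Fin.succ j ≠ iq := by
          rw [hiq]; exact fun h => hjq (Fin.succ_injective _ h)
        rw [Function.update_of_ne h1, hbdef, Fin.cons_succ, Function.update_of_ne hjq]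
    have hfB : ∀ i, f (B i) = tf i := fun i => B.constr_basis ℝ tf i
    have hgB : ∀ i, g (B i) = tg i := fun i => B.constr_basis ℝ tg i
    have hfe : f e = (2:ℝ) • e := by have h := hfB 0; rwa [hB0, htf0] at h
    have hge : g e = ((1:ℝ)/2) • e := by have h := hgB 0; rwa [hB0, htg0] at h
    have hfv : ∀ j, f (v j) = Function.update v q mm j := fun j => by
      rw [← hBs j, hfB, htfs]
    have hgv : ∀ j, g (v j) = Function.update v q ((2:ℝ) • v q - v p) j := fun j => by
      rw [← hBs j, hgB, htgs]
    have hfvq : f (v q) = mm := by rw [hfv, Function.update_self]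
    have hfvother : ∀ j, j ≠ q → f (v j) = v j := fun j h => by
      rw [hfv, Function.update_of_ne h]
    have hgvq : g (v q) = (2:ℝ) • v q - v p := by rw [hgv, Function.update_self]
    have hgvother : ∀ j, j ≠ q → g (v j) = v j := fun j h => by
      rw [hgv, Function.update_of_ne h]
    have hfg : f ∘ₗ g = LinearMap.id := by
      apply B.ext
      intro i
      rw [LinearMap.comp_apply, LinearMap.id_apply]
      refine Fin.cases ?_ (fun j => ?_) i
      · rw [hB0, hge, _root_.map_smul, hfe, smul_smul]; norm_num
      · rw [hBs]
        by_cases hjq : j = q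
        · subst hjq
          rw [hgvq, map_sub, _root_.map_smul, hfvq, hfvother p hpq, hmm]
          module
        · rw [hgvother j hjq, hfvother j hjq]
    have hgf : g ∘ₗ f = LinearMap.id := by
      apply B.ext
      intro i
      rw [LinearMap.comp_apply, LinearMap.id_apply]
      refine Fin.cases ?_ (fun j => ?_) i
      · rw [hB0, hfe, _root_.map_smul, hge, smul_smul]; norm_num
      · rw [hBs]
        by_cases hjq : j = q
        · subst hjq
          rw [hfvq, hmm, _root_.map_smul, map_add, hgvq, hgvother p hpq]
          module
        · rw [hfvother j hjq, hgvother j hjq]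
    have hinj : Function.Injective f := by
      intro a a' haa
      have h1 : g (f a) = g (f a') := by rw [haa]
      rwa [← LinearMap.comp_apply, ← LinearMap.comp_apply, hgf, LinearMap.id_apply,
        LinearMap.id_apply] at h1
    have hdetf : LinearMap.det f = 1 := by
      have h1 : B.det (⇑f ∘ ⇑B) = LinearMap.det f * B.det ⇑B := B.det_comp f ⇑B
      rw [B.det_self, mul_one] at h1
      have h2 : ⇑f ∘ ⇑B = tf := funext fun i => hfB i
      rw [h2] at h1
      have h3 : tf = Function.update (Function.update ⇑B iq mm) 0
          ((2:ℝ) • (Function.update ⇑B iq mm) 0) := by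
        rw [htf, hB]
        congr 1
      have h4 : mm = ((1:ℝ)/2) • (B ip + B iq) := by
        rw [hmm, hip, hiq, hBs, hBs]
      have hzero : B.det (Function.update ⇑B iq (B ip)) = 0 := by
        refine AlternatingMap.map_eq_zero_of_eq B.det _
          (i := ip) (j := iq) ?_ hipq
        rw [Function.update_of_ne hipq, Function.update_self]
      have h5 : B.det tf = 1 := by
        rw [h3, AlternatingMap.map_update_smul, Function.update_eq_self, h4,
          AlternatingMap.map_update_smul, AlternatingMap.map_update_add,
          Function.update_eq_self, B.det_self, hzero]
        norm_num
      rw [← h1, h5]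
    have hdetg : LinearMap.det g = 1 := by
      have h1 := congrArg LinearMap.det hfg
      rwa [LinearMap.det_comp, LinearMap.det_id, hdetf, one_mul] at h1
    set A : Matrix (Fin n) (Fin n) ℝ := Matrix.toEuclideanLin.symm f with hA
    set A' : Matrix (Fin n) (Fin n) ℝ := Matrix.toEuclideanLin.symm g with hA'
    have htA : Matrix.toEuclideanLin A = f := by
      rw [hA]; exact LinearEquiv.apply_symm_apply _ _
    have htA' : Matrix.toEuclideanLin A' = g := by
      rw [hA']; exact LinearEquiv.apply_symm_apply _ _
    have hdetA : A.det = 1 := by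
      have h1 : LinearMap.det (Matrix.toLin (PiLp.basisFun 2 ℝ (Fin n))
          (PiLp.basisFun 2 ℝ (Fin n)) A) = A.det := LinearMap.det_toLin _ _
      rw [← h1]
      have h2 : Matrix.toLin (PiLp.basisFun 2 ℝ (Fin n)) (PiLp.basisFun 2 ℝ (Fin n)) A = f := htA
      rw [h2, hdetf]
    have hdetA' : A'.det = 1 := by
      have h1 : LinearMap.det (Matrix.toLin (PiLp.basisFun 2 ℝ (Fin n))
          (PiLp.basisFun 2 ℝ (Fin n)) A') = A'.det := LinearMap.det_toLin _ _
      rw [← h1]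
      have h2 : Matrix.toLin (PiLp.basisFun 2 ℝ (Fin n)) (PiLp.basisFun 2 ℝ (Fin n)) A' = g := htA'
      rw [h2, hdetg]
    have hAA' : A * A' = 1 := by
      apply Matrix.toEuclideanLin.injective
      have hmul : Matrix.toEuclideanLin (A * A')
          = (Matrix.toEuclideanLin A) ∘ₗ (Matrix.toEuclideanLin A') := by
        rw [Matrix.toEuclideanLin_eq_toLin]
        exact Matrix.toLin_mul _ _ _ A A'
      rw [hmul, htA, htA', hfg]
      rw [Matrix.toEuclideanLin_eq_toLin, Matrix.toLin_one]
    set φ : Matrix.SpecialLinearGroup (Fin n) ℝ := ⟨A, hdetA⟩ with hφ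
    have hφinv : (φ⁻¹ : Matrix.SpecialLinearGroup (Fin n) ℝ) = ⟨A', hdetA'⟩ := by
      apply inv_eq_of_mul_eq_one_right
      apply Subtype.ext
      exact hAA'
    have hKset : matAct A T = convexHull ℝ (Set.range (Fin.cons (0:Euc n)
        (Function.update v q mm) : Fin (d'+3) → Euc n)) := by
      rw [matAct, htA, hTdef, LinearMap.image_convexHull, ← Set.range_comp, Fin.comp_cons,
        map_zero]
      have h2 : ⇑f ∘ v = Function.update v q mm := funext fun j => hfv j
      rw [h2]
    have h1 := hcontra φ T hT
    rw [hφinv] at h1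
    have h2 : Z (convexHull ℝ (Set.range (Fin.cons (0:Euc n)
        (Function.update v q mm) : Fin (d'+3) → Euc n))) = matAct A'ᵀ (Z T) := by
      rw [← hKset]; exact h1
    have hhalf : ∀ y ∈ Z T, Matrix.toEuclideanLin A'ᵀ y = ((1:ℝ)/2) • y := by
      intro y hy
      obtain ⟨c, rfl⟩ := hline y hy
      apply eq_of_inner_basis B
      intro i
      rw [inner_matVec_transpose, htA']
      refine Fin.cases ?_ (fun j => ?_) i
      · rw [hB0, hge]
        simp only [real_inner_smul_left, real_inner_smul_right]
        try ring
      · rw [hBs]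
        by_cases hjq : j = q
        · subst hjq
          rw [hgvq]
          simp only [inner_sub_right, real_inner_smul_left, real_inner_smul_right, hev]
          try ring
        · rw [hgvother j hjq]
          simp only [real_inner_smul_left, hev]
          try ring
    have hZK : Z (convexHull ℝ (Set.range (Fin.cons (0:Euc n)
        (Function.update v q mm) : Fin (d'+3) → Euc n)))
        = (fun y : Euc n => ((1:ℝ)/2) • y) '' (Z T) := by
      rw [h2, matAct]
      exact Set.image_congr (fun y hy => hhalf y hy)
    refine ⟨hZK, ?_⟩
    rw [← hKset, matAct, htA]
    exact simplex_image f hinj hT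
  -- the two halves and their intersection
  have h01 : (0 : Fin (d'+2)) ≠ 1 := by
    simp [Fin.ext_iff]
  obtain ⟨hZK, hKsimp⟩ := main_construct 0 1 h01
  obtain ⟨hZL, hLsimp⟩ := main_construct 1 0 (Ne.symm h01)
  set vK : Fin (d'+2) → Euc n := Function.update v 1 (((1:ℝ)/2) • (v 0 + v 1)) with hvKdef
  set vL : Fin (d'+2) → Euc n := Function.update v 0 (((1:ℝ)/2) • (v 1 + v 0)) with hvLdef
  set KK := convexHull ℝ (Set.range (Fin.cons (0:Euc n) vK : Fin (d'+3) → Euc n)) with hKK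
  set LL := convexHull ℝ (Set.range (Fin.cons (0:Euc n) vL : Fin (d'+3) → Euc n)) with hLL
  have hvK0 : vK 0 = v 0 := Function.update_of_ne h01 _ _
  have hvK1 : vK 1 = ((1:ℝ)/2) • (v 0 + v 1) := Function.update_self _ _ _
  have hvKs : ∀ j : Fin d', vK (Fin.succ (Fin.succ j)) = v (Fin.succ (Fin.succ j)) :=
    fun j => Function.update_of_ne (ssucc_ne_one j) _ _
  have hvL0 : vL 0 = ((1:ℝ)/2) • (v 1 + v 0) := Function.update_self _ _ _
  have hvL1 : vL 1 = v 1 := Function.update_of_ne (Ne.symm h01) _ _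
  have hvLs : ∀ j : Fin d', vL (Fin.succ (Fin.succ j)) = v (Fin.succ (Fin.succ j)) :=
    fun j => Function.update_of_ne (ssucc_ne_zero j) _ _
  -- the simplex D
  set u : Fin (d'+1) → Euc n := Fin.cons (((1:ℝ)/2) • (v 0 + v 1))
    (fun j : Fin d' => v (Fin.succ (Fin.succ j))) with hu
  have hu0 : u 0 = ((1:ℝ)/2) • (v 0 + v 1) := rfl
  have hus : ∀ j : Fin d', u (Fin.succ j) = v (Fin.succ (Fin.succ j)) := fun j => rfl
  have huLI : LinearIndependent ℝ u := by
    rw [hu]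
    refine linearIndependent_fin_cons.2 ⟨?_, ?_⟩
    · exact hv.comp (fun j : Fin d' => Fin.succ (Fin.succ j))
        (fun a c h => Fin.succ_injective _ (Fin.succ_injective _ h))
    · intro hcon
      rw [Submodule.mem_span_range_iff_exists_fun] at hcon
      obtain ⟨cc, hcc⟩ := hcon
      set gg : Fin (d'+2) → ℝ :=
        Fin.cons ((1:ℝ)/2) (Fin.cons ((1:ℝ)/2) (fun j => -cc j)) with hgg
      have hsum : ∑ i, gg i • v i = 0 := by
        rw [sum_split (F := fun i => gg i • v i)]
        simp only [hgg, Fin.cons_zero, cons2_one, cons2_ssucc]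
        simp only [neg_smul]
        rw [Finset.sum_neg_distrib, hcc]
        module
      have hzz := Fintype.linearIndependent_iff.1 hv gg hsum 0
      rw [hgg, Fin.cons_zero] at hzz
      norm_num at hzz
  have haffD : AffineIndependent ℝ (Fin.cons (0:Euc n) u : Fin (d'+2) → Euc n) :=
    (affcons_iff u).2 huLI
  set DD := convexHull ℝ (Set.range (Fin.cons (0:Euc n) u : Fin (d'+2) → Euc n)) with hDD
  have hDsimp : IsSimplex0 DD := ⟨d'+1, u, haffD, rfl⟩
  have hZD : Z DD = {(0:Euc n)} := Z_small n Z hbody hcontra u haffD (by omega)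
  -- K ∪ L = T
  have hunion : KK ∪ LL = T := by
    ext x
    simp only [Set.mem_union, hKK, hLL, hTdef, mem_chull_iff]
    constructor
    · rintro (⟨c, hc0, hc1, rfl⟩ | ⟨c, hc0, hc1, rfl⟩)
      · refine ⟨Fin.cons (c 0 + c 1 / 2) (Fin.cons (c 1 / 2)
          (fun j => c (Fin.succ (Fin.succ j)))), fun i => ?_, ?_, ?_⟩
        · refine Fin.cases ?_ (fun j => ?_) i
          · simp only [Fin.cons_zero]; linarith [hc0 0, hc0 1]
          · rw [Fin.cons_succ]
            refine Fin.cases ?_ (fun k => ?_) j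
            · simp only [Fin.cons_zero]; linarith [hc0 1]
            · rw [Fin.cons_succ]; exact hc0 _
        · rw [sum_split]
          simp only [Fin.cons_zero, cons2_one, cons2_ssucc]
          rw [sum_split] at hc1
          linarith
        · rw [sum_split (F := fun i => c i • vK i), sum_split]
          simp only [Fin.cons_zero, cons2_one, cons2_ssucc, hvK0, hvK1, hvKs]
          module
      · refine ⟨Fin.cons (c 0 / 2) (Fin.cons (c 0 / 2 + c 1)
          (fun j => c (Fin.succ (Fin.succ j)))), fun i => ?_, ?_, ?_⟩
        · refine Fin.cases ?_ (fun j => ?_) i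
          · simp only [Fin.cons_zero]; linarith [hc0 0]
          · rw [Fin.cons_succ]
            refine Fin.cases ?_ (fun k => ?_) j
            · simp only [Fin.cons_zero]; linarith [hc0 0, hc0 1]
            · rw [Fin.cons_succ]; exact hc0 _
        · rw [sum_split]
          simp only [Fin.cons_zero, cons2_one, cons2_ssucc]
          rw [sum_split] at hc1
          linarith
        · rw [sum_split (F := fun i => c i • vL i), sum_split]
          simp only [Fin.cons_zero, cons2_one, cons2_ssucc, hvL0, hvL1, hvLs]
          module
    · rintro ⟨c, hc0, hc1, rfl⟩
      by_cases hcc : c 1 ≤ c 0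
      · left
        refine ⟨Fin.cons (c 0 - c 1) (Fin.cons (2 * c 1)
          (fun j => c (Fin.succ (Fin.succ j)))), fun i => ?_, ?_, ?_⟩
        · refine Fin.cases ?_ (fun j => ?_) i
          · simp only [Fin.cons_zero]; linarith
          · rw [Fin.cons_succ]
            refine Fin.cases ?_ (fun k => ?_) j
            · simp only [Fin.cons_zero]; linarith [hc0 1]
            · rw [Fin.cons_succ]; exact hc0 _
        · rw [sum_split]
          simp only [Fin.cons_zero, cons2_one, cons2_ssucc]
          rw [sum_split] at hc1
          linarith
        · rw [sum_split (F := fun i => c i • v i), sum_split]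
          simp only [Fin.cons_zero, cons2_one, cons2_ssucc, hvK0, hvK1, hvKs]
          module
      · right
        refine ⟨Fin.cons (2 * c 0) (Fin.cons (c 1 - c 0)
          (fun j => c (Fin.succ (Fin.succ j)))), fun i => ?_, ?_, ?_⟩
        · refine Fin.cases ?_ (fun j => ?_) i
          · simp only [Fin.cons_zero]; linarith [hc0 0]
          · rw [Fin.cons_succ]
            refine Fin.cases ?_ (fun k => ?_) j
            · simp only [Fin.cons_zero]; linarith
            · rw [Fin.cons_succ]; exact hc0 _
        · rw [sum_split]
          simp only [Fin.cons_zero, cons2_one, cons2_ssucc]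
          rw [sum_split] at hc1
          linarith
        · rw [sum_split (F := fun i => c i • v i), sum_split]
          simp only [Fin.cons_zero, cons2_one, cons2_ssucc, hvL0, hvL1, hvLs]
          module
  -- K ∩ L = D
  have hinter : KK ∩ LL = DD := by
    ext x
    simp only [Set.mem_inter_iff, hKK, hLL, hDD, mem_chull_iff]
    constructor
    · rintro ⟨⟨c, hc0, hc1, hx1⟩, ⟨c2, hc20, hc21, hx2⟩⟩
      set cK : Fin (d'+2) → ℝ := Fin.cons (c 0 + c 1 / 2) (Fin.cons (c 1 / 2)
        (fun j => c (Fin.succ (Fin.succ j)))) with hcKdef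
      set cL : Fin (d'+2) → ℝ := Fin.cons (c2 0 / 2) (Fin.cons (c2 0 / 2 + c2 1)
        (fun j => c2 (Fin.succ (Fin.succ j)))) with hcLdef
      have e1 : ∑ i, cK i • v i = x := by
        rw [hx1, sum_split (F := fun i => cK i • v i), sum_split (F := fun i => c i • vK i)]
        simp only [hcKdef, Fin.cons_zero, cons2_one, cons2_ssucc, hvK0, hvK1, hvKs]
        module
      have e2 : ∑ i, cL i • v i = x := by
        rw [hx2, sum_split (F := fun i => cL i • v i), sum_split (F := fun i => c2 i • vL i)]
        simp only [hcLdef, Fin.cons_zero, cons2_one, cons2_ssucc, hvL0, hvL1, hvLs]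
        module
      have hkey : ∀ i, cK i - cL i = 0 := by
        apply Fintype.linearIndependent_iff.1 hv
        have hsub : ∑ i, (cK i - cL i) • v i = ∑ i, cK i • v i - ∑ i, cL i • v i := by
          rw [← Finset.sum_sub_distrib]
          exact Finset.sum_congr rfl fun i _ => sub_smul _ _ _
        rw [hsub, e1, e2, sub_self]
      have k0 := hkey 0
      have k1 := hkey 1
      rw [hcKdef, hcLdef, Fin.cons_zero, Fin.cons_zero] at k0
      rw [hcKdef, hcLdef, cons2_one, cons2_one] at k1
      have hc00 : c 0 = 0 := by linarith [hc0 0, hc20 1]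
      refine ⟨Fin.cons (c 1) (fun j => c (Fin.succ (Fin.succ j))), fun i => ?_, ?_, ?_⟩
      · refine Fin.cases ?_ (fun k => ?_) i
        · simp only [Fin.cons_zero]; exact hc0 1
        · rw [Fin.cons_succ]; exact hc0 _
      · rw [sum_split1]
        simp only [Fin.cons_zero, Fin.cons_succ]
        rw [sum_split] at hc1
        linarith [hc0 0]
      · rw [hx1, sum_split (F := fun i => c i • vK i), sum_split1]
        simp only [Fin.cons_zero, Fin.cons_succ, hvK0, hvK1, hvKs, hu, hc00]
        module
    · rintro ⟨cD, hd0, hd1, rfl⟩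
      constructor
      · have hcons01 : (Fin.cons (0:ℝ) cD : Fin (d'+2) → ℝ) 1 = cD 0 := by
          rw [← Fin.succ_zero_eq_one, Fin.cons_succ]
        refine ⟨Fin.cons (0:ℝ) cD, fun i => ?_, ?_, ?_⟩
        · refine Fin.cases ?_ (fun j => ?_) i
          · simp only [Fin.cons_zero]; exact le_refl 0
          · rw [Fin.cons_succ]; exact hd0 _
        · rw [sum_split (F := fun i => (Fin.cons (0:ℝ) cD : Fin (d'+2) → ℝ) i)]
          rw [sum_split1] at hd1
          simp only [Fin.cons_zero, Fin.cons_succ, hcons01]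
          linarith
        · rw [sum_split1 (F := fun i => cD i • u i),
            sum_split (F := fun i => (Fin.cons (0:ℝ) cD : Fin (d'+2) → ℝ) i • vK i)]
          simp only [hcons01, Fin.cons_zero, Fin.cons_succ, hvK0, hvK1, hvKs, hu, hus]
          module
      · refine ⟨Fin.cons (cD 0) (Fin.cons (0:ℝ) (fun j => cD (Fin.succ j))), fun i => ?_, ?_, ?_⟩
        · refine Fin.cases ?_ (fun j => ?_) i
          · simp only [Fin.cons_zero]; exact hd0 0
          · rw [Fin.cons_succ]
            refine Fin.cases ?_ (fun k => ?_) j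
            · simp only [Fin.cons_zero]; exact le_refl 0
            · rw [Fin.cons_succ]; exact hd0 _
        · rw [sum_split]
          simp only [Fin.cons_zero, cons2_one, cons2_ssucc]
          rw [sum_split1] at hd1
          linarith
        · rw [sum_split1 (F := fun i => cD i • u i), sum_split]
          simp only [Fin.cons_zero, Fin.cons_succ, cons2_one, cons2_ssucc, hvL0, hvL1, hvLs,
            hu, hus]
          module
  -- apply the valuation property
  have hvalKL := hval KK LL hKsimp hLsimp (by rw [hunion]; exact hT) (by rw [hinter]; exact hDsimp)
  rw [hunion, hinter, hZD] at hvalKL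
  have hZTU : Z T ∪ {(0:Euc n)} = Z T :=
    Set.union_eq_self_of_subset_right (Set.singleton_subset_iff.2 h0)
  rw [hZTU, hconv.convexHull_eq, hZK, hZL, Set.union_self] at hvalKL
  have himg2 : (fun y : Euc n => ((1:ℝ)/2) • y) '' Z T = ((1:ℝ)/2) • Z T := by
    rw [← Set.image_smul]
  rw [himg2, ((hconv.smul _)).convexHull_eq] at hvalKL
  -- Z T = (1/2) • Z T forces Z T = {0}
  obtain ⟨y0, hy0mem, hy0max⟩ := hcomp.exists_isMaxOn ⟨0, h0⟩ continuous_norm.continuousOn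
  have hy0' : y0 ∈ ((1:ℝ)/2) • Z T := hvalKL ▸ hy0mem
  obtain ⟨z, hz, hzy⟩ := hy0'
  have h9 : ‖y0‖ = (1/2 : ℝ) * ‖z‖ := by
    rw [← hzy, norm_smul]
    norm_num
  have h10 : ‖z‖ ≤ ‖y0‖ := hy0max hz
  have h11 : ‖y0‖ ≤ 0 := by linarith
  refine Set.eq_singleton_iff_unique_mem.2 ⟨h0, fun y hy => ?_⟩
  exact norm_le_zero_iff.1 (le_trans (hy0max hy) h11)


/-- Lemma 3.1: for `n ≥ 3`, if `Z : T_o^n → K_o^n` is an `SL(n)` contravariant `L_∞`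
Minkowski valuation, then `Z T = {o}` for every `T ∈ T_o^n` with `dim T < n`. -/
theorem sln_contravariant_Linfty_vanishes_on_lower_dim (n : ℕ) (hn : 3 ≤ n)
    (Z : Set (Euc n) → Set (Euc n))
    (hbody : ∀ T : Set (Euc n), IsSimplex0 T → IsConvexBody0 (Z T))
    (hval : ∀ K L : Set (Euc n), IsSimplex0 K → IsSimplex0 L → IsSimplex0 (K ∪ L) →
      IsSimplex0 (K ∩ L) →
      convexHull ℝ (Z (K ∪ L) ∪ Z (K ∩ L)) = convexHull ℝ (Z K ∪ Z L))
    (hcontra : ∀ (φ : Matrix.SpecialLinearGroup (Fin n) ℝ) (T : Set (Euc n)), IsSimplex0 T →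
      Z (matAct (φ : Matrix (Fin n) (Fin n) ℝ) T)
        = matAct (((φ⁻¹ : Matrix.SpecialLinearGroup (Fin n) ℝ) : Matrix (Fin n) (Fin n) ℝ))ᵀ (Z T)) :
    ∀ T : Set (Euc n), IsSimplex0 T → sdim T < n → Z T = {(0 : Euc n)} := by
  intro T hT hdim
  obtain ⟨d, v, haff, rfl⟩ := hT
  have hv := (affcons_iff v).1 haff
  rw [sdim_chull v hv] at hdim
  by_cases hcase : d + 1 < n
  · exact Z_small n Z hbody hcontra v haff hcase
  · obtain ⟨d', rfl⟩ : ∃ d', d = d' + 2 := ⟨d - 2, by omega⟩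
    exact Z_main n Z hbody hval hcontra (by omega) v haff
end
end

section
/- Let n ≥ 2. If a map Φ : P_o^n → C_p(ℝ^n) is SL(n) covariant, then Φ(P)(x) = Φ(P)(x|P) for every P ∈ P_o^n and every x ∈ ℝ^n, where x|P is the orthogonal projection of x onto the linear hull of P. In particular, if a map Z : P_o^n → K_o^n is SL(n) covariant, then ZP ⊂ lin P and h_{ZP}(x) = h_{ZP}(x|P) for every P ∈ P_o^n and x ∈ ℝ^n. -/
open scoped RealInnerProductSpace BigOperators Pointwise ENNReal
open MeasureTheory Filter Matrix

noncomputable section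

/-- Orthogonal projection onto the linear hull of `P`. -/
def projSpan {n : ℕ} (P : Set (Euc n)) (x : Euc n) : Euc n :=
  (Submodule.orthogonalProjection (Submodule.span ℝ P) x : Euc n)

namespace SLNAux

variable {n : ℕ}

lemma toEucLin_shear (v w y : Euc n) :
    Matrix.toEuclideanLin (1 + Matrix.vecMulVec (v : Fin n → ℝ) (w : Fin n → ℝ)) y
      = y + ⟪w, y⟫ • v := by
  ext i
  simp [Matrix.toEuclideanLin_apply, Matrix.add_mulVec, Matrix.one_mulVec,
    Matrix.mulVec, Matrix.vecMulVec_apply, dotProduct, PiLp.inner_apply,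
    Finset.mul_sum, Finset.sum_mul, mul_comm, mul_assoc, mul_left_comm]
lemma det_shear (v w : Euc n) (h : ⟪v, w⟫ = 0) :
    Matrix.det (1 + Matrix.vecMulVec (v : Fin n → ℝ) (w : Fin n → ℝ)) = 1 := by
  rw [Matrix.vecMulVec_eq (Fin 1), Matrix.det_one_add_replicateCol_mul_replicateRow]
  have h2 : (w : Fin n → ℝ) ⬝ᵥ (v : Fin n → ℝ) = 0 := by
    simpa [dotProduct, PiLp.inner_apply, mul_comm] using h
  rw [h2, add_zero]
lemma transpose_shear (v w : Euc n) :
    (1 + Matrix.vecMulVec (v : Fin n → ℝ) (w : Fin n → ℝ))ᵀ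
      = 1 + Matrix.vecMulVec (w : Fin n → ℝ) (v : Fin n → ℝ) := by
  rw [Matrix.transpose_add, Matrix.transpose_one]
  congr 1
  ext i j
  simp [Matrix.vecMulVec_apply, mul_comm]

lemma inner_cont (x : Euc n) : Continuous fun y : Euc n => ⟪x, y⟫ :=
  continuous_const.inner continuous_id

lemma supp_bdd {K : Set (Euc n)} (hK : IsCompact K) (x : Euc n) :
    BddAbove ((fun y => ⟪x, y⟫) '' K) :=
  (hK.image (inner_cont x)).bddAbove

lemma supp_le {K : Set (Euc n)} (hK : IsCompact K) {x y : Euc n} (hy : y ∈ K) :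
    ⟪x, y⟫ ≤ supp K x :=
  le_csSup (supp_bdd hK x) ⟨y, hy, rfl⟩

lemma supp_zero {K : Set (Euc n)} (hne : K.Nonempty) : supp K 0 = 0 := by
  unfold supp
  rw [show (fun y : Euc n => ⟪(0 : Euc n), y⟫) = fun _ => (0:ℝ) from
    funext fun y => inner_zero_left y, hne.image_const, csSup_singleton]

lemma supp_continuous {K : Set (Euc n)} (hK : IsCompact K) (hne : K.Nonempty) :
    Continuous (supp K) := by
  obtain ⟨R, hR⟩ := hK.isBounded.exists_norm_le
  obtain ⟨y₀, hy₀⟩ := hne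
  have hR0 : 0 ≤ R := le_trans (norm_nonneg y₀) (hR y₀ hy₀)
  have step : ∀ a b : Euc n, supp K a ≤ supp K b + R * ‖a - b‖ := by
    intro a b
    apply csSup_le (Set.Nonempty.image _ ⟨y₀, hy₀⟩)
    rintro r ⟨y, hy, rfl⟩
    show ⟪a, y⟫ ≤ supp K b + R * ‖a - b‖
    have h1 : ⟪a - b, y⟫ = ⟪a, y⟫ - ⟪b, y⟫ := inner_sub_left a b y
    have h2 : ⟪a - b, y⟫ ≤ ‖a - b‖ * ‖y‖ := real_inner_le_norm _ _
    have h3 : ‖a - b‖ * ‖y‖ ≤ ‖a - b‖ * R :=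
      mul_le_mul_of_nonneg_left (hR y hy) (norm_nonneg _)
    have h4 : ⟪b, y⟫ ≤ supp K b := supp_le hK hy
    nlinarith [norm_nonneg (a - b)]
  have : LipschitzWith (Real.toNNReal R) (supp K) := by
    apply LipschitzWith.of_dist_le_mul
    intro a b
    rw [Real.dist_eq, dist_eq_norm, abs_sub_le_iff, Real.coe_toNNReal R hR0]
    constructor
    · linarith [step a b]
    · have hs : ‖b - a‖ = ‖a - b‖ := norm_sub_rev b a
      have := step b a
      rw [hs] at this
      linarith
  exact this.continuous

lemma supp_smul {K : Set (Euc n)} (hK : IsCompact K) (hne : K.Nonempty) {c : ℝ}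
    (hc : 0 ≤ c) (x : Euc n) : supp K (c • x) = c * supp K x := by
  rcases eq_or_lt_of_le hc with h | h
  · rw [← h, zero_smul, zero_mul, supp_zero hne]
  · apply le_antisymm
    · apply csSup_le (hne.image _)
      rintro r ⟨y, hy, rfl⟩
      show ⟪c • x, y⟫ ≤ c * supp K x
      rw [real_inner_smul_left]
      exact mul_le_mul_of_nonneg_left (supp_le hK hy) hc
    · have h1 : supp K x ≤ c⁻¹ * supp K (c • x) := by
        apply csSup_le (hne.image _)
        rintro r ⟨y, hy, rfl⟩
        have h2 : ⟪c • x, y⟫ ≤ supp K (c • x) := supp_le hK hy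
        rw [real_inner_smul_left] at h2
        show ⟪x, y⟫ ≤ c⁻¹ * supp K (c • x)
        rw [← mul_le_mul_iff_right₀ h]
        calc c * ⟪x, y⟫ ≤ supp K (c • x) := h2
          _ = c * (c⁻¹ * supp K (c • x)) := by field_simp
      calc c * supp K x ≤ c * (c⁻¹ * supp K (c • x)) :=
            mul_le_mul_of_nonneg_left h1 hc
        _ = supp K (c • x) := by field_simp

lemma supp_matAct (K : Set (Euc n)) (A : Matrix (Fin n) (Fin n) ℝ) (x : Euc n) :
    supp (matAct A K) x = supp K (matVec Aᵀ x) := by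
  unfold supp matAct matVec
  rw [← Set.image_comp]
  congr 1
  apply Set.image_congr
  intro y _
  show ⟪x, Matrix.toEuclideanLin A y⟫ = ⟪Matrix.toEuclideanLin Aᵀ x, y⟫
  have h := Matrix.toEuclideanLin_conjTranspose_eq_adjoint (𝕜 := ℝ) A
  rw [Matrix.conjTranspose_eq_transpose_of_trivial] at h
  rw [h, LinearMap.adjoint_inner_left]
lemma key (n : ℕ) (hn : 2 ≤ n) (p : ℝ) (hp : 1 ≤ p)
    (Φ : Set (Euc n) → Euc n → ℝ)
    (hreg : ∀ P : Set (Euc n), IsPolytope0 P → Continuous (Φ P) ∧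
        ∀ c : ℝ, 0 ≤ c → ∀ x : Euc n, Φ P (c • x) = c ^ p * Φ P x)
    (hcov : ∀ (φ : Matrix.SpecialLinearGroup (Fin n) ℝ) (P : Set (Euc n)), IsPolytope0 P →
        ∀ x : Euc n, Φ (matAct (φ : Matrix (Fin n) (Fin n) ℝ) P) x
          = Φ P (matVec ((φ : Matrix (Fin n) (Fin n) ℝ))ᵀ x))
    (P : Set (Euc n)) (hP : IsPolytope0 P) :
    ∀ x : Euc n, Φ P x = Φ P (projSpan P x) := by
  set V : Submodule ℝ (Euc n) := Submodule.span ℝ P with hV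
  -- the basic shear step
  have shear : ∀ v w : Euc n, w ∈ Vᗮ → ⟪v, w⟫ = 0 →
      ∀ x : Euc n, Φ P x = Φ P (x + ⟪v, x⟫ • w) := by
    intro v w hw hvw x
    set A : Matrix (Fin n) (Fin n) ℝ :=
      1 + Matrix.vecMulVec (v : Fin n → ℝ) (w : Fin n → ℝ) with hA
    have hdet : A.det = 1 := det_shear v w hvw
    have hfix : matAct A P = P := by
      have heq : ∀ y ∈ P, Matrix.toEuclideanLin A y = y := by
        intro y hy
        have hy' : y ∈ V := Submodule.subset_span hy
        have hwy : ⟪w, y⟫ = 0 := (Submodule.mem_orthogonal' V w).1 hw y hy'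
        rw [hA, toEucLin_shear, hwy, zero_smul, add_zero]
      calc matAct A P = id '' P := Set.image_congr heq
        _ = P := Set.image_id P
    have hc := hcov ⟨A, hdet⟩ P hP x
    rw [show ((⟨A, hdet⟩ : Matrix.SpecialLinearGroup (Fin n) ℝ) : Matrix (Fin n) (Fin n) ℝ) = A from rfl,
      hfix] at hc
    rw [hc]
    congr 1
    show Matrix.toEuclideanLin Aᵀ x = x + ⟪v, x⟫ • w
    rw [hA, transpose_shear, toEucLin_shear]
  -- projections
  have hproj : ∀ x : Euc n, projSpan P x = (Submodule.orthogonalProjectionOnto V x : Euc n) := fun _ => rfl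
  -- main step when the projection is nonzero
  have main : ∀ x : Euc n, projSpan P x ≠ 0 → Φ P x = Φ P (projSpan P x) := by
    intro x hq
    set q : Euc n := projSpan P x with hqdef
    have hqV : q ∈ V := (Submodule.orthogonalProjectionOnto V x).2
    have hrV : x - q ∈ Vᗮ := Submodule.sub_starProjection_mem_orthogonal x
    have hnq : ⟪q, q⟫ ≠ 0 := fun h => hq (inner_self_eq_zero.mp h)
    have hqr : ⟪q, x - q⟫ = 0 := (Submodule.mem_orthogonal V (x - q)).1 hrV q hqV
    have hvw : ⟪(⟪q, q⟫)⁻¹ • q, -(x - q)⟫ = 0 := by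
      rw [inner_neg_right, real_inner_smul_left, hqr, mul_zero, neg_zero]
    have hkey := shear ((⟪q, q⟫)⁻¹ • q) (-(x - q)) (neg_mem hrV) hvw x
    have hco : ⟪(⟪q, q⟫)⁻¹ • q, x⟫ = 1 := by
      have : ⟪q, x⟫ = ⟪q, q⟫ := by
        have := inner_sub_right (𝕜 := ℝ) q x q
        rw [hqr] at this
        linarith
      rw [real_inner_smul_left, this, inv_mul_cancel₀ hnq]
    rw [hco, one_smul] at hkey
    have : x + -(x - q) = q := by abel
    rw [this] at hkey
    exact hkey
  have hzero : Φ P 0 = 0 := by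
    have h0 := (hreg P hP).2 0 le_rfl 0
    rw [zero_smul, Real.zero_rpow (by linarith : p ≠ 0), zero_mul] at h0
    exact h0
  intro x
  by_cases hq : projSpan P x = 0
  swap
  · exact main x hq
  rw [hq, hzero]
  by_cases hx : x = 0
  · rw [hx, hzero]
  have hxV : x ∈ Vᗮ := by
    have h : x - (Submodule.orthogonalProjectionOnto V x : Euc n) ∈ Vᗮ :=
        Submodule.sub_starProjection_mem_orthogonal (K := V) x
    have h2 : (Submodule.orthogonalProjectionOnto V x : Euc n) = 0 := hq
    rwa [h2, sub_zero] at h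
  by_cases hVbot : V = ⊥
  · -- two shears to double x
    have hVtop : Vᗮ = (⊤ : Submodule ℝ (Euc n)) := by
      rw [hVbot, Submodule.bot_orthogonal_eq_top]
    have hxx : ⟪x, x⟫ ≠ 0 := fun h => hx (inner_self_eq_zero.mp h)
    obtain ⟨z, hz0, hxz⟩ : ∃ z : Euc n, z ≠ 0 ∧ ⟪x, z⟫ = 0 := by
      have hne : ((ℝ ∙ x)ᗮ : Submodule ℝ (Euc n)) ≠ ⊥ := by
        intro h
        have h2 : (ℝ ∙ x) = (⊤ : Submodule ℝ (Euc n)) := Submodule.orthogonal_eq_bot_iff.mp h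
        have h3 := finrank_span_singleton (K := ℝ) hx
        rw [h2, finrank_top] at h3
        rw [finrank_euclideanSpace_fin] at h3
        omega
      obtain ⟨z, hz, hz0⟩ := Submodule.exists_mem_ne_zero_of_ne_bot hne
      exact ⟨z, hz0, (Submodule.mem_orthogonal _ _).1 hz x (Submodule.mem_span_singleton_self x)⟩
    set w₁ : Euc n := (‖x‖ / ‖z‖) • z with hw₁
    have hzn : ‖z‖ ≠ 0 := norm_ne_zero_iff.mpr hz0
    have hxw₁ : ⟪x, w₁⟫ = 0 := by rw [hw₁, real_inner_smul_right, hxz, mul_zero]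
    have hw₁x : ⟪w₁, x⟫ = 0 := by rw [real_inner_comm]; exact hxw₁
    have hw₁w₁ : ⟪w₁, w₁⟫ = ⟪x, x⟫ := by
      rw [hw₁, real_inner_smul_left, real_inner_smul_right,
        real_inner_self_eq_norm_sq, real_inner_self_eq_norm_sq]
      field_simp
    have step1 := shear ((⟪x, x⟫)⁻¹ • x) w₁ (by rw [hVtop]; trivial)
      (by rw [real_inner_smul_left, hxw₁, mul_zero]) x
    have hc1 : ⟪(⟪x, x⟫)⁻¹ • x, x⟫ = 1 := by
      rw [real_inner_smul_left, inv_mul_cancel₀ hxx]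
    rw [hc1, one_smul] at step1
    have step2 := shear ((2 * ⟪x, x⟫)⁻¹ • (x + w₁)) (x - w₁) (by rw [hVtop]; trivial)
      (by
        rw [real_inner_smul_left]
        have : ⟪x + w₁, x - w₁⟫ = 0 := by
          rw [inner_sub_right, inner_add_left, inner_add_left, hxw₁, hw₁x, hw₁w₁]
          ring
        rw [this, mul_zero]) (x + w₁)
    have hc2 : ⟪(2 * ⟪x, x⟫)⁻¹ • (x + w₁), x + w₁⟫ = 1 := by
      have hsum : ⟪x + w₁, x + w₁⟫ = 2 * ⟪x, x⟫ := by
        rw [inner_add_left, inner_add_right, inner_add_right, hxw₁, hw₁x, hw₁w₁]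
        ring
      rw [real_inner_smul_left, hsum, inv_mul_cancel₀ (mul_ne_zero two_ne_zero hxx)]
    rw [hc2, one_smul] at step2
    have h2x : x + w₁ + (x - w₁) = (2 : ℝ) • x := by
      rw [two_smul]; abel
    rw [h2x] at step2
    have hhom := (hreg P hP).2 2 (by norm_num) x
    have heq : Φ P x = 2 ^ p * Φ P x := by
      conv_lhs => rw [step1, step2, hhom]
    have hlt : (1 : ℝ) < 2 ^ p :=
      (Real.one_lt_rpow_iff_of_pos (by norm_num)).2 (Or.inl ⟨by norm_num, by linarith⟩)
    have hmul : ((2:ℝ) ^ p - 1) * Φ P x = 0 := by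
      rw [sub_mul, one_mul]; linarith
    rcases mul_eq_zero.mp hmul with h | h
    · linarith
    · exact h
  · -- continuity argument
    obtain ⟨u, huV, hu0⟩ := Submodule.exists_mem_ne_zero_of_ne_bot hVbot
    have hcont : Continuous (Φ P) := (hreg P hP).1
    have h1 : Tendsto (fun ε : ℝ => Φ P (x + ε • u)) (nhdsWithin 0 (Set.Ioi 0))
        (nhds (Φ P x)) := by
      have hc : Continuous (fun ε : ℝ => x + ε • u) :=
        continuous_const.add (continuous_id.smul continuous_const)
      have := (hcont.comp hc).tendsto 0
      simp only [Function.comp, zero_smul, add_zero] at this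
      exact this.mono_left nhdsWithin_le_nhds
    have h2 : ∀ ε ∈ Set.Ioi (0:ℝ), Φ P (x + ε • u) = ε ^ p * Φ P u := by
      intro ε hε
      have hε' : (0:ℝ) < ε := hε
      have hproj2 : projSpan P (x + ε • u) = ε • u := by
        show (Submodule.orthogonalProjectionOnto V (x + ε • u) : Euc n) = ε • u
        rw [map_add, (Submodule.orthogonalProjectionOnto V).map_smul ε u, Submodule.coe_add, Submodule.coe_smul]
        have e1 : (Submodule.orthogonalProjectionOnto V x : Euc n) = 0 := hq
        have e2 : (Submodule.orthogonalProjectionOnto V u : Euc n) = u :=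
          Submodule.starProjection_eq_self_iff.mpr huV
        rw [e1, e2, zero_add]
      rw [main _ (by rw [hproj2]; exact smul_ne_zero (ne_of_gt hε') hu0), hproj2,
        (hreg P hP).2 ε (le_of_lt hε') u]
    have h3 : Tendsto (fun ε : ℝ => ε ^ p * Φ P u) (nhdsWithin 0 (Set.Ioi 0)) (nhds 0) := by
      have hca : ContinuousAt (fun ε : ℝ => ε ^ p) 0 :=
        Real.continuousAt_rpow_const 0 p (Or.inr (by linarith))
      have h4 : Tendsto (fun ε : ℝ => ε ^ p * Φ P u) (nhdsWithin 0 (Set.Ioi 0))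
          (nhds ((0:ℝ) ^ p * Φ P u)) :=
        (hca.tendsto.mul_const (Φ P u)).mono_left nhdsWithin_le_nhds
      rwa [Real.zero_rpow (by linarith : p ≠ 0), zero_mul] at h4
    have := tendsto_nhds_unique
      (h1.congr' (Filter.eventuallyEq_of_mem self_mem_nhdsWithin h2)) h3
    exact this

end SLNAux

/-- Lemma 4.1: for `n ≥ 2`, if `Φ : P_o^n → C_p(ℝ^n)` is `SL(n)` covariant then
`Φ(P)(x) = Φ(P)(x|P)` for all `P ∈ P_o^n` and `x ∈ ℝ^n`; in particular, if
`Z : P_o^n → K_o^n` is `SL(n)` covariant then `Z P ⊆ lin P` and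
`h_{ZP}(x) = h_{ZP}(x|P)`. -/
theorem sln_covariant_projection_property (n : ℕ) (hn : 2 ≤ n) (p : ℝ) (hp : 1 ≤ p) :
    (∀ Φ : Set (Euc n) → Euc n → ℝ,
      (∀ P : Set (Euc n), IsPolytope0 P → Continuous (Φ P) ∧
        ∀ c : ℝ, 0 ≤ c → ∀ x : Euc n, Φ P (c • x) = c ^ p * Φ P x) →
      (∀ (φ : Matrix.SpecialLinearGroup (Fin n) ℝ) (P : Set (Euc n)), IsPolytope0 P →
        ∀ x : Euc n, Φ (matAct (φ : Matrix (Fin n) (Fin n) ℝ) P) x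
          = Φ P (matVec ((φ : Matrix (Fin n) (Fin n) ℝ))ᵀ x)) →
      ∀ P : Set (Euc n), IsPolytope0 P → ∀ x : Euc n, Φ P x = Φ P (projSpan P x)) ∧
    (∀ Z : Set (Euc n) → Set (Euc n),
      (∀ P : Set (Euc n), IsPolytope0 P → IsConvexBody0 (Z P)) →
      (∀ (φ : Matrix.SpecialLinearGroup (Fin n) ℝ) (P : Set (Euc n)), IsPolytope0 P →
        Z (matAct (φ : Matrix (Fin n) (Fin n) ℝ) P)
          = matAct (φ : Matrix (Fin n) (Fin n) ℝ) (Z P)) →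
      ∀ P : Set (Euc n), IsPolytope0 P →
        Z P ⊆ (Submodule.span ℝ P : Set (Euc n)) ∧
        ∀ x : Euc n, supp (Z P) x = supp (Z P) (projSpan P x)) := by
  constructor
  · intro Φ hreg hcov P hP
    exact SLNAux.key n hn p hp Φ hreg hcov P hP
  · intro Z hZbody hZcov P hP
    obtain ⟨hKc, hKconv, hK0⟩ := hZbody P hP
    have hne : (Z P).Nonempty := ⟨0, hK0⟩
    have hmain : ∀ x : Euc n, supp (Z P) x = supp (Z P) (projSpan P x) := by
      refine SLNAux.key n hn 1 le_rfl (fun Q x => supp (Z Q) x) ?_ ?_ P hP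
      · intro Q hQ
        obtain ⟨hQc, -, hQ0⟩ := hZbody Q hQ
        refine ⟨SLNAux.supp_continuous hQc ⟨0, hQ0⟩, fun c hc x => ?_⟩
        show supp (Z Q) (c • x) = c ^ (1:ℝ) * supp (Z Q) x
        rw [SLNAux.supp_smul hQc ⟨0, hQ0⟩ hc, Real.rpow_one]
      · intro φ Q hQ x
        show supp (Z (matAct _ Q)) x = supp (Z Q) (matVec _ x)
        rw [hZcov φ Q hQ, SLNAux.supp_matAct]
    refine ⟨?_, hmain⟩
    intro y hy
    set V : Submodule ℝ (Euc n) := Submodule.span ℝ P with hV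
    set q : Euc n := (Submodule.orthogonalProjectionOnto V y : Euc n) with hq
    have hrV : y - q ∈ Vᗮ := Submodule.sub_starProjection_mem_orthogonal y
    have h1 : supp (Z P) (y - q) = 0 := by
      rw [hmain (y - q)]
      have hz : projSpan P (y - q) = 0 := by
        show (Submodule.orthogonalProjectionOnto V (y - q) : Euc n) = 0
        rw [Submodule.orthogonalProjectionOnto_apply_of_mem_orthogonal hrV,
          Submodule.coe_zero]
      rw [hz, SLNAux.supp_zero hne]
    have h2 : ⟪y - q, y⟫ ≤ 0 := by
      have h := SLNAux.supp_le hKc (x := y - q) hy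
      rwa [h1] at h
    have hq0 : ⟪y - q, q⟫ = 0 :=
      (Submodule.mem_orthogonal' V (y - q)).1 hrV q (Submodule.orthogonalProjectionOnto V y).2
    have h3 : ⟪y - q, y - q⟫ ≤ 0 := by
      have hexp : ⟪y - q, y - q⟫ = ⟪y - q, y⟫ - ⟪y - q, q⟫ := inner_sub_right _ _ _
      rw [hexp, hq0]
      linarith
    have h4 : y - q = 0 := inner_self_eq_zero.mp (le_antisymm h3 real_inner_self_nonneg)
    have h5 : y = q := by rwa [sub_eq_zero] at h4
    rw [h5]
    exact (Submodule.orthogonalProjectionOnto V y).2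
end
end

section
/- Let K be a convex body in ℝ^n containing the origin in its interior. Then for every x ≠ 0, sup over u ∈ S^{n−1} of (x·u)/h_K(u) equals 1/ρ_K(x), which equals h_{K*}(x); consequently Π̂_∞⁺K = K*, i.e., lim_{p→∞} h_{Π̂_p⁺K}(x) = h_{K*}(x) for all x ∈ ℝ^n, where the limit is the essential supremum of u ↦ (x·u)/h_K(u) with respect to the cone-volume measure of K. -/
set_option maxHeartbeats 1000000


open scoped RealInnerProductSpace BigOperators Pointwise ENNReal
open MeasureTheory Filter Matrix
open scoped Topology

noncomputable section

/-- The radial function `ρ_K(x) = max {λ > 0 : λ x ∈ K}`. -/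
def radial {n : ℕ} (K : Set (Euc n)) (x : Euc n) : ℝ :=
  sSup {t : ℝ | 0 < t ∧ t • x ∈ K}

/-- The polar body `K* = {x : ⟪x, y⟫ ≤ 1 for all y ∈ K}`. -/
def polarBody {n : ℕ} (K : Set (Euc n)) : Set (Euc n) :=
  {x : Euc n | ∀ y ∈ K, ⟪x, y⟫ ≤ 1}

open scoped Classical in
/-- An outer unit normal of `K` at the radial boundary point `ρ_K(y) • y` determined by
`y` (a choice; junk value `0` if none exists). -/
def radialNormal {n : ℕ} (K : Set (Euc n)) (y : Euc n) : Euc n :=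
  if h : ∃ u : Euc n, ‖u‖ = 1 ∧ ⟪u, radial K y • y⟫ = supp K u then h.choose else 0

/-- The cone-volume measure `dv_K = h_K dS_K` of `K`, realized (on the unit sphere) as
`n` times the pushforward of Lebesgue measure restricted to `K` under the radial-normal
map, so that `v_K(ω) = n · vol {y ∈ K : radialNormal K y ∈ ω} = ∫_ω h_K dS_K`. -/
def coneVol {n : ℕ} (K : Set (Euc n)) : Measure (Euc n) :=
  (n : ℝ≥0∞) • Measure.map (radialNormal K) (volume.restrict K)

namespace Aux

variable {n : ℕ} {C K : Set (Euc n)} {R ε : ℝ}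

lemma supp_bddAbove (hsub : C ⊆ Metric.closedBall 0 R) (x : Euc n) :
    BddAbove ((fun y => ⟪x, y⟫) '' C) := by
  refine ⟨‖x‖ * R, ?_⟩
  rintro _ ⟨y, hy, rfl⟩
  have h1 : ⟪x, y⟫ ≤ ‖x‖ * ‖y‖ := real_inner_le_norm x y
  have h2 : ‖y‖ ≤ R := by simpa [dist_eq_norm] using hsub hy
  exact h1.trans (mul_le_mul_of_nonneg_left h2 (norm_nonneg x))

lemma le_supp (hsub : C ⊆ Metric.closedBall 0 R) {y : Euc n} (hy : y ∈ C) (x : Euc n) :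
    ⟪x, y⟫ ≤ supp C x :=
  le_csSup (supp_bddAbove hsub x) ⟨y, hy, rfl⟩

lemma supp_le (hne : C.Nonempty) {x : Euc n} {c : ℝ} (h : ∀ y ∈ C, ⟪x, y⟫ ≤ c) :
    supp C x ≤ c :=
  csSup_le (hne.image _) (by rintro _ ⟨y, hy, rfl⟩; exact h y hy)

lemma supp_zero_arg (hne : C.Nonempty) : supp C 0 = 0 := by
  have : (fun y => ⟪(0 : Euc n), y⟫) '' C = {0} := by
    have : (fun y : Euc n => ⟪(0 : Euc n), y⟫) = fun _ => (0 : ℝ) := by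
      funext y; simp
    rw [this, Set.Nonempty.image_const hne]
  rw [supp, this, csSup_singleton]

lemma supp_nonneg (h0 : (0 : Euc n) ∈ C) (hsub : C ⊆ Metric.closedBall 0 R) (x : Euc n) :
    0 ≤ supp C x := by
  have := le_supp hsub h0 x
  simpa using this

lemma supp_smul (hne : C.Nonempty) (hsub : C ⊆ Metric.closedBall 0 R) {c : ℝ} (hc : 0 < c)
    (x : Euc n) : supp C (c • x) = c * supp C x := by
  refine le_antisymm (supp_le hne fun y hy => ?_) ?_
  · have : ⟪c • x, y⟫ = c * ⟪x, y⟫ := real_inner_smul_left x y c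
    rw [this]
    exact mul_le_mul_of_nonneg_left (le_supp hsub hy x) hc.le
  · have h : supp C x ≤ c⁻¹ * supp C (c • x) := by
      refine supp_le hne fun y hy => ?_
      have h1 : ⟪c • x, y⟫ ≤ supp C (c • x) := le_supp hsub hy _
      have h2 : ⟪c • x, y⟫ = c * ⟪x, y⟫ := real_inner_smul_left x y c
      rw [h2] at h1
      rw [le_inv_mul_iff₀ hc]
      linarith
    calc c * supp C x ≤ c * (c⁻¹ * supp C (c • x)) := mul_le_mul_of_nonneg_left h hc.le
    _ = supp C (c • x) := by field_simp

lemma zero_mem_polar : (0 : Euc n) ∈ polarBody K := fun y _ => by simp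

lemma polar_subset (hball : Metric.ball 0 ε ⊆ K) (hε : 0 < ε) :
    polarBody K ⊆ Metric.closedBall 0 (2 / ε) := by
  intro w hw
  simp only [Metric.mem_closedBall, dist_eq_norm, sub_zero]
  rcases eq_or_ne w 0 with rfl | hw0
  · simp; positivity
  · have hwn : 0 < ‖w‖ := norm_pos_iff.2 hw0
    set y : Euc n := (ε / 2 / ‖w‖) • w with hy
    have hyK : y ∈ K := by
      apply hball
      simp only [Metric.mem_ball, dist_eq_norm, sub_zero, hy, norm_smul]
      rw [Real.norm_eq_abs, abs_of_pos (by positivity)]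
      rw [div_mul_cancel₀ _ hwn.ne']
      linarith
    have h1 : ⟪w, y⟫ ≤ 1 := hw y hyK
    rw [hy, real_inner_smul_right, real_inner_self_eq_norm_sq] at h1
    have : ε / 2 / ‖w‖ * ‖w‖ ^ 2 = ε / 2 * ‖w‖ := by field_simp
    rw [this] at h1
    rw [le_div_iff₀ hε]
    nlinarith

lemma smul_mem_polar (hsub : K ⊆ Metric.closedBall 0 R) {u : Euc n}
    (hpos : 0 < supp K u) : (supp K u)⁻¹ • u ∈ polarBody K := by
  intro y hy
  rw [real_inner_smul_left]
  have := le_supp hsub hy u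
  rw [inv_mul_le_iff₀ hpos, mul_one]
  exact this

lemma supp_pos_of_ne (hsub : K ⊆ Metric.closedBall 0 R) (hball : Metric.ball 0 ε ⊆ K)
    (hε : 0 < ε) {u : Euc n} (hu : u ≠ 0) : 0 < supp K u := by
  have hun : 0 < ‖u‖ := norm_pos_iff.2 hu
  set y : Euc n := (ε / 2 / ‖u‖) • u with hy
  have hyK : y ∈ K := by
    apply hball
    simp only [Metric.mem_ball, dist_eq_norm, sub_zero, hy, norm_smul]
    rw [Real.norm_eq_abs, abs_of_pos (by positivity), div_mul_cancel₀ _ hun.ne']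
    linarith
  have h1 : ⟪u, y⟫ ≤ supp K u := le_supp hsub hyK u
  rw [hy, real_inner_smul_right, real_inner_self_eq_norm_sq] at h1
  have h2 : 0 < ε / 2 / ‖u‖ * ‖u‖ ^ 2 := by positivity
  linarith

lemma radial_spec (hK : IsCompact K) (hsub : K ⊆ Metric.closedBall 0 R)
    (hball : Metric.ball 0 ε ⊆ K) (hε : 0 < ε) {x : Euc n} (hx : x ≠ 0) :
    0 < radial K x ∧ radial K x • x ∈ K ∧ ∀ t, radial K x < t → t • x ∉ K := by
  have hxn : 0 < ‖x‖ := norm_pos_iff.2 hx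
  set S := {t : ℝ | 0 < t ∧ t • x ∈ K} with hS
  have ht₀ : ε / 2 / ‖x‖ ∈ S := by
    constructor
    · positivity
    · apply hball
      simp only [Metric.mem_ball, dist_eq_norm, sub_zero, norm_smul]
      rw [Real.norm_eq_abs, abs_of_pos (by positivity), div_mul_cancel₀ _ hxn.ne']
      linarith
  have hSne : S.Nonempty := ⟨_, ht₀⟩
  have hSbdd : BddAbove S := by
    refine ⟨R / ‖x‖, ?_⟩
    rintro t ⟨htpos, htK⟩
    have h1 : ‖t • x‖ ≤ R := by simpa [dist_eq_norm] using hsub htK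
    rw [norm_smul, Real.norm_eq_abs, abs_of_pos htpos] at h1
    rw [le_div_iff₀ hxn]
    exact h1
  have hρpos : 0 < radial K x := lt_of_lt_of_le (by positivity) (le_csSup hSbdd ht₀)
  have hρK : radial K x • x ∈ K := by
    have h1 : radial K x ∈ closure S := csSup_mem_closure hSne hSbdd
    have hc : Continuous fun t : ℝ => t • x := continuous_id.smul continuous_const
    have h2 : radial K x • x ∈ closure ((fun t : ℝ => t • x) '' S) := by
      apply image_closure_subset_closure_image hc
      exact ⟨_, h1, rfl⟩
    have h3 : (fun t : ℝ => t • x) '' S ⊆ K := by rintro _ ⟨t, ⟨_, htK⟩, rfl⟩; exact htK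
    have h4 : closure ((fun t : ℝ => t • x) '' S) ⊆ K := closure_minimal h3 hK.isClosed
    exact h4 h2
  refine ⟨hρpos, hρK, fun t ht htK => ?_⟩
  have : t ∈ S := ⟨hρpos.trans ht, htK⟩
  exact absurd (le_csSup hSbdd this) (not_le.2 ht)

lemma exists_normal (hK : IsCompact K) (hconv : Convex ℝ K)
    (h0 : (0 : Euc n) ∈ interior K) (hsub : K ⊆ Metric.closedBall 0 R)
    (hball : Metric.ball 0 ε ⊆ K) (hε : 0 < ε) {x : Euc n} (hx : x ≠ 0) :
    ∃ u : Euc n, ‖u‖ = 1 ∧ ⟪u, radial K x • x⟫ = supp K u := by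
  obtain ⟨hρpos, hρK, hρmax⟩ := radial_spec hK hsub hball hε hx
  have hxn : 0 < ‖x‖ := norm_pos_iff.2 hx
  set z := radial K x • x with hz
  have hznotint : z ∉ interior K := by
    intro hzi
    obtain ⟨δ, hδpos, hδ⟩ := Metric.isOpen_iff.1 isOpen_interior z hzi
    set t := radial K x + δ / (2 * ‖x‖) with htdef
    have h1 : t • x ∈ Metric.ball z δ := by
      simp only [Metric.mem_ball, dist_eq_norm, htdef, hz]
      rw [← sub_smul]
      have : radial K x + δ / (2 * ‖x‖) - radial K x = δ / (2 * ‖x‖) := by ring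
      rw [this, norm_smul, Real.norm_eq_abs, abs_of_pos (by positivity)]
      rw [div_mul_eq_mul_div, mul_comm]
      rw [div_lt_iff₀ (by positivity)]
      nlinarith
    refine hρmax t ?_ (interior_subset (hδ h1))
    rw [htdef]
    exact lt_add_of_pos_right _ (div_pos hδpos (mul_pos two_pos hxn))
  obtain ⟨f, hf⟩ := geometric_hahn_banach_open_point hconv.interior isOpen_interior hznotint
  have hfK : ∀ a ∈ K, f a ≤ f z := by
    intro a ha
    have hsegment : ∀ t ∈ Set.Ioo (0:ℝ) 1, f (t • a) ≤ f z := by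
      intro t ⟨ht0, ht1⟩
      have hmem : t • a + (1 - t) • (0 : Euc n) ∈ interior K :=
        hconv.combo_self_interior_mem_interior ha h0 ht0.le (by linarith) (by ring)
      rw [smul_zero, add_zero] at hmem
      exact (hf _ hmem).le
    have htend : Tendsto (fun t : ℝ => f (t • a)) (nhdsWithin 1 (Set.Iio 1)) (nhds (f a)) := by
      have hc : Continuous fun t : ℝ => f (t • a) :=
        f.continuous.comp (continuous_id.smul continuous_const)
      have := hc.tendsto 1
      rw [one_smul] at this
      exact this.mono_left nhdsWithin_le_nhds
    refine le_of_tendsto htend ?_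
    filter_upwards [Ioo_mem_nhdsLT_of_mem (Set.mem_Ioc.2 ⟨zero_lt_one, le_refl 1⟩)] with t ht
    exact hsegment t ht
  have hfz : 0 < f z := by
    have := hf 0 h0
    simpa using this
  set v := (InnerProductSpace.toDual ℝ (Euc n)).symm f with hv
  have hvw : ∀ w : Euc n, ⟪v, w⟫ = f w := by
    intro w
    rw [hv, InnerProductSpace.toDual_symm_apply]
  have hvne : v ≠ 0 := by
    intro h
    rw [← hvw z, h] at hfz
    simp at hfz
  have hvn : 0 < ‖v‖ := norm_pos_iff.2 hvne
  refine ⟨‖v‖⁻¹ • v, ?_, ?_⟩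
  · rw [norm_smul, Real.norm_eq_abs, abs_of_pos (by positivity), inv_mul_cancel₀ hvn.ne']
  · have hsupp : supp K (‖v‖⁻¹ • v) ≤ ⟪‖v‖⁻¹ • v, z⟫ := by
      refine supp_le ⟨z, hρK⟩ fun a ha => ?_
      rw [real_inner_smul_left, real_inner_smul_left, hvw, hvw]
      exact mul_le_mul_of_nonneg_left (hfK a ha) (by positivity)
    exact le_antisymm (le_supp hsub hρK _) hsupp

lemma radial_inv_eq (hK : IsCompact K) (hconv : Convex ℝ K)
    (h0 : (0 : Euc n) ∈ interior K) (hsub : K ⊆ Metric.closedBall 0 R)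
    (hball : Metric.ball 0 ε ⊆ K) (hε : 0 < ε) {x : Euc n} (hx : x ≠ 0) :
    (radial K x)⁻¹ = supp (polarBody K) x := by
  obtain ⟨hρpos, hρK, hρmax⟩ := radial_spec hK hsub hball hε hx
  obtain ⟨u, hu1, huz⟩ := exists_normal hK hconv h0 hsub hball hε hx
  have hune : u ≠ 0 := by intro h; rw [h] at hu1; simp at hu1
  have hspos : 0 < supp K u := supp_pos_of_ne hsub hball hε hune
  have hpolar_sub := polar_subset hball hε
  have hwmem : (supp K u)⁻¹ • u ∈ polarBody K := smul_mem_polar hsub hspos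
  have hbound : supp (polarBody K) x ≤ (radial K x)⁻¹ := by
    refine supp_le ⟨0, zero_mem_polar⟩ fun w' hw' => ?_
    have h1 : ⟪w', radial K x • x⟫ ≤ 1 := hw' _ hρK
    rw [real_inner_smul_right] at h1
    rw [real_inner_comm, ← one_div, le_div_iff₀ hρpos, mul_comm]
    exact h1
  have hux : ⟪u, x⟫ = supp K u / radial K x := by
    rw [real_inner_smul_right] at huz
    rw [eq_div_iff hρpos.ne']
    linarith [huz]
  have hwitness : ⟪x, (supp K u)⁻¹ • u⟫ = (radial K x)⁻¹ := by
    rw [real_inner_smul_right, real_inner_comm, hux]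
    field_simp
  have := le_supp hpolar_sub hwmem x
  rw [hwitness] at this
  exact le_antisymm this hbound

lemma sSup_ratio (hK : IsCompact K) (hconv : Convex ℝ K)
    (h0 : (0 : Euc n) ∈ interior K) (hsub : K ⊆ Metric.closedBall 0 R)
    (hball : Metric.ball 0 ε ⊆ K) (hε : 0 < ε) {x : Euc n} (hx : x ≠ 0) :
    sSup {r : ℝ | ∃ u : Euc n, ‖u‖ = 1 ∧ r = ⟪x, u⟫ / supp K u} = (radial K x)⁻¹ := by
  obtain ⟨hρpos, hρK, hρmax⟩ := radial_spec hK hsub hball hε hx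
  have hpolar_sub := polar_subset hball hε
  have hbound : ∀ r ∈ {r : ℝ | ∃ u : Euc n, ‖u‖ = 1 ∧ r = ⟪x, u⟫ / supp K u},
      r ≤ (radial K x)⁻¹ := by
    rintro r ⟨u, hu1, rfl⟩
    have hune : u ≠ 0 := by intro h; rw [h] at hu1; simp at hu1
    have hspos : 0 < supp K u := supp_pos_of_ne hsub hball hε hune
    have hwmem := smul_mem_polar hsub hspos
    have h1 : ⟪x, (supp K u)⁻¹ • u⟫ ≤ supp (polarBody K) x := le_supp hpolar_sub hwmem x
    rw [real_inner_smul_right] at h1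
    rw [div_eq_mul_inv, radial_inv_eq hK hconv h0 hsub hball hε hx]
    linarith [h1]
  obtain ⟨u, hu1, huz⟩ := exists_normal hK hconv h0 hsub hball hε hx
  have hune : u ≠ 0 := by intro h; rw [h] at hu1; simp at hu1
  have hspos : 0 < supp K u := supp_pos_of_ne hsub hball hε hune
  have hwitness : ⟪x, u⟫ / supp K u = (radial K x)⁻¹ := by
    rw [real_inner_smul_right] at huz
    have hux : ⟪u, x⟫ = supp K u / radial K x := by
      rw [eq_div_iff hρpos.ne']
      linarith [huz]
    rw [real_inner_comm, hux]
    field_simp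
  refine le_antisymm (csSup_le ⟨_, u, hu1, rfl⟩ hbound) ?_
  refine le_csSup ⟨(radial K x)⁻¹, hbound⟩ ?_
  exact ⟨u, hu1, hwitness.symm⟩

lemma grad_eq_of_subgrad {G : Euc n → ℝ} {y w : Euc n} (hd : DifferentiableAt ℝ G y)
    (hs : ∀ z, G y + ⟪w, z - y⟫ ≤ G z) : gradient G y = w := by
  have hF : HasFDerivAt G ((InnerProductSpace.toDual ℝ (Euc n)) (gradient G y)) y :=
    hasGradientAt_iff_hasFDerivAt.1 hd.hasGradientAt
  have key : ∀ v : Euc n, ⟪gradient G y, v⟫ = ⟪w, v⟫ := by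
    intro v
    have hγ : HasDerivAt (fun t : ℝ => y + t • v) v 0 := by
      simpa using ((hasDerivAt_id (0:ℝ)).smul_const v).const_add y
    have hdg : HasDerivAt (fun t : ℝ => G (y + t • v)) ⟪gradient G y, v⟫ 0 := by
      have h1 : HasFDerivAt G ((InnerProductSpace.toDual ℝ (Euc n)) (gradient G y))
          ((fun t : ℝ => y + t • v) 0) := by simpa using hF
      have := h1.comp_hasDerivAt 0 hγ
      simpa [InnerProductSpace.toDual_apply_apply, Function.comp_def] using this
    have hslope := hasDerivAt_iff_tendsto_slope.1 hdg
    have hchord : ∀ t : ℝ, t * ⟪w, v⟫ ≤ G (y + t • v) - G (y + (0:ℝ) • v) := by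
      intro t
      have := hs (y + t • v)
      have h2 : y + t • v - y = t • v := by abel
      rw [h2, real_inner_smul_right] at this
      simp only [zero_smul, add_zero]
      linarith
    have hlb : ⟪w, v⟫ ≤ ⟪gradient G y, v⟫ := by
      refine ge_of_tendsto (hslope.mono_left (nhdsWithin_mono (0:ℝ) (show Set.Ioi (0:ℝ) ⊆ {(0:ℝ)}ᶜ from fun t ht => Set.mem_compl_singleton_iff.2 (ne_of_gt ht)))) ?_
      filter_upwards [self_mem_nhdsWithin] with t ht
      have ht0 : (0:ℝ) < t := ht
      rw [slope_def_field]
      rw [le_div_iff₀ (by simpa using ht0)]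
      have := hchord t
      simp only [zero_smul, add_zero] at this ⊢
      linarith
    have hub : ⟪gradient G y, v⟫ ≤ ⟪w, v⟫ := by
      refine le_of_tendsto (hslope.mono_left (nhdsWithin_mono (0:ℝ) (show Set.Iio (0:ℝ) ⊆ {(0:ℝ)}ᶜ from fun t ht => Set.mem_compl_singleton_iff.2 (ne_of_lt ht)))) ?_
      filter_upwards [self_mem_nhdsWithin] with t ht
      have ht0 : t < (0:ℝ) := ht
      rw [slope_def_field]
      rw [div_le_iff_of_neg (by simpa using ht0)]
      have := hchord t
      simp only [zero_smul, add_zero] at this ⊢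
      linarith
    linarith
  exact ext_inner_right ℝ key

lemma supp_lipschitz (hne : C.Nonempty) (hsub : C ⊆ Metric.closedBall 0 R) (hR : 0 ≤ R) :
    LipschitzWith R.toNNReal (supp C) := by
  apply LipschitzWith.of_dist_le_mul
  intro a b
  rw [Real.dist_eq, abs_sub_le_iff]
  have key : ∀ c d : Euc n, supp C c - supp C d ≤ R.toNNReal * dist c d := by
    intro c d
    rw [sub_le_iff_le_add]
    refine supp_le hne fun y hy => ?_
    have h1 : ⟪c, y⟫ = ⟪d, y⟫ + ⟪c - d, y⟫ := by
      rw [← inner_add_left]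
      congr 1
      abel
    have h2 : ⟪c - d, y⟫ ≤ ‖c - d‖ * ‖y‖ := real_inner_le_norm _ _
    have h3 : ‖y‖ ≤ R := by simpa [dist_eq_norm] using hsub hy
    have h4 : ⟪d, y⟫ ≤ supp C d := le_supp hsub hy d
    have h5 : ‖c - d‖ * ‖y‖ ≤ ‖c - d‖ * R := by
      apply mul_le_mul_of_nonneg_left h3 (norm_nonneg _)
    have h6 : (R.toNNReal : ℝ) * dist c d = R * ‖c - d‖ := by
      rw [Real.coe_toNNReal R hR, dist_eq_norm]
    rw [h6]
    nlinarith [norm_nonneg (c - d)]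
  constructor
  · exact key a b
  · rw [dist_comm]
    exact key b a

lemma pointwise_grad (hK : IsCompact K) (hconv : Convex ℝ K)
    (h0 : (0 : Euc n) ∈ interior K) (hsub : K ⊆ Metric.closedBall 0 R)
    (hball : Metric.ball 0 ε ⊆ K) (hε : 0 < ε) {y : Euc n} (hy : y ≠ 0)
    (hd : DifferentiableAt ℝ (supp (polarBody K)) y) :
    radialNormal K y = ‖gradient (supp (polarBody K)) y‖⁻¹ • gradient (supp (polarBody K)) y ∧
    gradient (supp (polarBody K)) y ∈ polarBody K ∧
    ⟪gradient (supp (polarBody K)) y, y⟫ = supp (polarBody K) y ∧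
    supp K (gradient (supp (polarBody K)) y) = 1 ∧
    gradient (supp (polarBody K)) y ≠ 0 := by
  obtain ⟨hρpos, hρK, hρmax⟩ := radial_spec hK hsub hball hε hy
  have hex := exists_normal hK hconv h0 hsub hball hε hy
  obtain ⟨hu1, huz⟩ := hex.choose_spec
  set u := hex.choose with hudef
  have hune : u ≠ 0 := by intro h; rw [h] at hu1; simp at hu1
  have hspos : 0 < supp K u := supp_pos_of_ne hsub hball hε hune
  set s := supp K u with hsdef
  set w : Euc n := s⁻¹ • u with hwdef
  have hwmem : w ∈ polarBody K := smul_mem_polar hsub hspos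
  have hsub2 := polar_subset hball hε
  have h1 : radial K y * ⟪u, y⟫ = s := by
    rw [real_inner_smul_right] at huz; linarith [huz]
  have huy : ⟪u, y⟫ = s / radial K y := by
    rw [eq_div_iff hρpos.ne']; linarith
  have hwy : ⟪w, y⟫ = supp (polarBody K) y := by
    rw [hwdef, real_inner_smul_left, huy, ← radial_inv_eq hK hconv h0 hsub hball hε hy]
    field_simp
  have hFpos : 0 < supp (polarBody K) y := by
    rw [← radial_inv_eq hK hconv h0 hsub hball hε hy]
    positivity
  have hsubgrad : ∀ z, supp (polarBody K) y + ⟪w, z - y⟫ ≤ supp (polarBody K) z := by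
    intro z
    have h2 : ⟪w, z - y⟫ = ⟪w, z⟫ - ⟪w, y⟫ := inner_sub_right w z y
    have h3 : ⟪w, z⟫ ≤ supp (polarBody K) z := by
      rw [real_inner_comm]
      exact le_supp hsub2 hwmem z
    rw [h2, hwy]
    linarith
  have hgrad : gradient (supp (polarBody K)) y = w := grad_eq_of_subgrad hd hsubgrad
  have hwnorm : ‖w‖ = s⁻¹ := by
    rw [hwdef, norm_smul, Real.norm_eq_abs, abs_of_pos (inv_pos.2 hspos), hu1, mul_one]
  have hwne : w ≠ 0 := by
    intro h
    rw [h] at hwy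
    simp at hwy
    linarith [hFpos, hwy]
  have hKne : K.Nonempty := ⟨0, interior_subset h0⟩
  refine ⟨?_, ?_, ?_, ?_, ?_⟩
  · rw [hgrad, hwnorm, inv_inv, hwdef, smul_smul, mul_inv_cancel₀ hspos.ne', one_smul]
    show radialNormal K y = u
    rw [radialNormal, dif_pos hex]
  · rw [hgrad]; exact hwmem
  · rw [hgrad]; exact hwy
  · rw [hgrad, hwdef, supp_smul hKne hsub (inv_pos.2 hspos), ← hsdef,
      inv_mul_cancel₀ hspos.ne']
  · rw [hgrad]; exact hwne

lemma measurable_Nm :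
    Measurable (fun y : Euc n =>
      ‖gradient (supp (polarBody K)) y‖⁻¹ • gradient (supp (polarBody K)) y) := by
  have h1 : Measurable (fun y => gradient (supp (polarBody K)) y) := by
    have h2 : Measurable (fderiv ℝ (supp (polarBody K))) := measurable_fderiv ℝ _
    exact ((InnerProductSpace.toDual ℝ (Euc n)).symm.continuous.measurable).comp h2
  exact (h1.norm.inv).smul h1

lemma ae_ne_zero (hn : 0 < n) : ∀ᵐ y ∂(volume : Measure (Euc n)), y ≠ 0 := by
  haveI : Nontrivial (Euc n) := by
    apply Module.nontrivial_of_finrank_pos (R := ℝ)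
    rw [finrank_euclideanSpace_fin]
    exact hn
  rw [ae_iff]
  have h : {a : Euc n | ¬ a ≠ 0} = {0} := by ext a; simp
  rw [h]
  exact measure_singleton 0

lemma ae_diff_polar (hball : Metric.ball 0 ε ⊆ K) (hε : 0 < ε) :
    ∀ᵐ y ∂(volume : Measure (Euc n)), DifferentiableAt ℝ (supp (polarBody K)) y := by
  have hlip : LipschitzWith ((2/ε).toNNReal) (supp (polarBody K)) :=
    supp_lipschitz ⟨0, zero_mem_polar⟩ (polar_subset hball hε) (by positivity)
  exact hlip.ae_differentiableAt

lemma ae_props (hn : 0 < n) (hK : IsCompact K) (hconv : Convex ℝ K)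
    (h0 : (0 : Euc n) ∈ interior K) (hsub : K ⊆ Metric.closedBall 0 R)
    (hball : Metric.ball 0 ε ⊆ K) (hε : 0 < ε) :
    ∀ᵐ y ∂(volume.restrict K),
      radialNormal K y =
        ‖gradient (supp (polarBody K)) y‖⁻¹ • gradient (supp (polarBody K)) y ∧
      gradient (supp (polarBody K)) y ∈ polarBody K ∧
      ⟪gradient (supp (polarBody K)) y, y⟫ = supp (polarBody K) y ∧
      supp K (gradient (supp (polarBody K)) y) = 1 ∧
      gradient (supp (polarBody K)) y ≠ 0 := by
  filter_upwards [ae_restrict_of_ae (ae_diff_polar hball hε),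
    ae_restrict_of_ae (ae_ne_zero hn)] with y hd hy
  exact pointwise_grad hK hconv h0 hsub hball hε hy hd

lemma aemeas_radialNormal (hn : 0 < n) (hK : IsCompact K) (hconv : Convex ℝ K)
    (h0 : (0 : Euc n) ∈ interior K) (hsub : K ⊆ Metric.closedBall 0 R)
    (hball : Metric.ball 0 ε ⊆ K) (hε : 0 < ε) :
    AEMeasurable (radialNormal K) (volume.restrict K) := by
  apply measurable_Nm.aemeasurable.congr
  filter_upwards [ae_props hn hK hconv h0 hsub hball hε] with y hy
  exact hy.1.symm

lemma measurable_g (hKne : K.Nonempty) (hsub : K ⊆ Metric.closedBall 0 R) (hR : 0 ≤ R)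
    (x : Euc n) :
    Measurable (fun u : Euc n => ⟪x, u⟫ / supp K u) := by
  have h1 : Continuous fun u : Euc n => ⟪x, u⟫ := continuous_const.inner continuous_id
  have h2 : Continuous (supp K) := (supp_lipschitz hKne hsub hR).continuous
  exact h1.measurable.div h2.measurable

lemma essSup_eq (hn : 0 < n) (hK : IsCompact K) (hconv : Convex ℝ K)
    (h0 : (0 : Euc n) ∈ interior K) (hsub : K ⊆ Metric.closedBall 0 R) (hR : 0 ≤ R)
    (hball : Metric.ball 0 ε ⊆ K) (hε : 0 < ε) (x : Euc n) :
    essSup (fun u : Euc n => ENNReal.ofReal (⟪x, u⟫ / supp K u)) (coneVol K)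
      = ENNReal.ofReal (supp (polarBody K) x) := by
  have hKne : K.Nonempty := ⟨0, interior_subset h0⟩
  have hsub2 := polar_subset hball hε
  have hpne : (polarBody K).Nonempty := ⟨0, zero_mem_polar⟩
  have haep := ae_props hn hK hconv h0 hsub hball hε
  have haem := aemeas_radialNormal hn hK hconv h0 hsub hball hε
  have hgmeas : Measurable (fun u : Euc n => ENNReal.ofReal (⟪x, u⟫ / supp K u)) :=
    ENNReal.measurable_ofReal.comp (measurable_g hKne hsub hR x)
  rw [coneVol, show essSup (fun u : Euc n => ENNReal.ofReal (⟪x, u⟫ / supp K u)) ((n:ℝ≥0∞) • Measure.map (radialNormal K) (volume.restrict K)) = essSup (fun u : Euc n => ENNReal.ofReal (⟪x, u⟫ / supp K u)) (Measure.map (radialNormal K) (volume.restrict K)) by simp_rw [essSup, Measure.ae_ennreal_smul_measure_eq (by exact_mod_cast hn.ne' : (n:ℝ≥0∞) ≠ 0)]]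
  rw [essSup_map_measure hgmeas.aemeasurable haem]
  have hcongr : ((fun u : Euc n => ENNReal.ofReal (⟪x, u⟫ / supp K u)) ∘ radialNormal K)
      =ᵐ[volume.restrict K]
      (fun y => ENNReal.ofReal ⟪x, gradient (supp (polarBody K)) y⟫) := by
    filter_upwards [haep] with y hy
    obtain ⟨hrn, hmem, hiy, hs1, hwne⟩ := hy
    have hc : 0 < ‖gradient (supp (polarBody K)) y‖⁻¹ :=
      inv_pos.2 (norm_pos_iff.2 hwne)
    simp only [Function.comp_apply, hrn]
    rw [real_inner_smul_right, supp_smul hKne hsub hc, hs1, mul_one, mul_comm,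
      mul_div_assoc, div_self hc.ne', mul_one]
  rw [essSup_congr_ae hcongr]
  apply le_antisymm
  · refine essSup_le_of_ae_le _ ?_
    filter_upwards [haep] with y hy
    exact ENNReal.ofReal_le_ofReal (le_supp hsub2 hy.2.1 x)
  · rcases eq_or_ne x 0 with rfl | hx
    · have h00 : supp (polarBody K) 0 = 0 := supp_zero_arg hpne
      simp [h00]
    · have hFx : 0 < supp (polarBody K) x := by
        rw [← radial_inv_eq hK hconv h0 hsub hball hε hx]
        have := (radial_spec hK hsub hball hε hx).1
        positivity
      by_contra hlt
      push_neg at hlt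
      set E := essSup (fun y => ENNReal.ofReal ⟪x, gradient (supp (polarBody K)) y⟫)
        (volume.restrict K) with hE
      have hEtop : E ≠ ⊤ := hlt.ne_top
      have hElt : E.toReal < supp (polarBody K) x := by
        have := ENNReal.toReal_lt_toReal hEtop ENNReal.ofReal_ne_top |>.2 hlt
        rwa [ENNReal.toReal_ofReal hFx.le] at this
      set c := (E.toReal + supp (polarBody K) x) / 2 with hc
      have hc0 : 0 < c := by
        have := ENNReal.toReal_nonneg (a := E)
        rw [hc]; linarith
      have hcE : E.toReal < c := by rw [hc]; linarith
      have hcF : c < supp (polarBody K) x := by rw [hc]; linarith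
      set ε' := supp (polarBody K) x - c with hε'
      have hε'0 : 0 < ε' := by rw [hε']; linarith
      have hxn : 0 < ‖x‖ := norm_pos_iff.2 hx
      set τ := ε / (2 * ‖x‖) with hτ
      have hτ0 : 0 < τ := by rw [hτ]; positivity
      set Rs := 2 / ε with hRs
      have hRs0 : 0 < Rs := by rw [hRs]; positivity
      set δ := min (ε / 4) (τ * ε' / (2 * Rs)) with hδ
      have hδ0 : 0 < δ := lt_min (by positivity) (by positivity)
      set z₀ : Euc n := τ • x with hz₀
      have hz₀n : ‖z₀‖ = ε / 2 := by
        rw [hz₀, norm_smul, Real.norm_eq_abs, abs_of_pos hτ0, hτ]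
        field_simp
      have hball2 : Metric.ball z₀ δ ⊆ K := by
        intro y hy
        apply hball
        simp only [Metric.mem_ball, dist_eq_norm, sub_zero] at hy ⊢
        have h1 : ‖y‖ ≤ ‖y - z₀‖ + ‖z₀‖ := by
          simpa using norm_add_le (y - z₀) z₀
        have h2 : δ ≤ ε / 4 := min_le_left _ _
        rw [hz₀n] at h1
        linarith
      have hballne : ∀ y ∈ Metric.ball z₀ δ, y ≠ (0 : Euc n) := by
        intro y hy h
        rw [h] at hy
        simp only [Metric.mem_ball, dist_eq_norm, zero_sub, norm_neg] at hy
        rw [hz₀n] at hy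
        have h2 : δ ≤ ε / 4 := min_le_left _ _
        linarith
      have hFz₀ : supp (polarBody K) z₀ = τ * supp (polarBody K) x :=
        supp_smul hpne hsub2 hτ0 x
      have hlipF : ∀ a b : Euc n,
          supp (polarBody K) a - supp (polarBody K) b ≤ Rs * ‖a - b‖ := by
        intro a b
        have hlip : LipschitzWith ((2/ε).toNNReal) (supp (polarBody K)) :=
          supp_lipschitz hpne hsub2 (by positivity)
        have := hlip.dist_le_mul a b
        rw [Real.dist_eq, Real.coe_toNNReal _ (by positivity : (0:ℝ) ≤ 2/ε),
          dist_eq_norm] at this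
        have h1 := abs_le.1 this |>.2
        have h2 := abs_le.1 this |>.1
        rw [hRs]
        linarith [le_abs_self (supp (polarBody K) a - supp (polarBody K) b)]
      have hpoint : ∀ y ∈ Metric.ball z₀ δ, DifferentiableAt ℝ (supp (polarBody K)) y →
          c ≤ ⟪x, gradient (supp (polarBody K)) y⟫ := by
        intro y hy hd
        obtain ⟨_, hmem, hiy, _, _⟩ :=
          pointwise_grad hK hconv h0 hsub hball hε (hballne y hy) hd
        set w := gradient (supp (polarBody K)) y with hw
        have hwb : ‖w‖ ≤ Rs := by
          have := hsub2 hmem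
          simpa [dist_eq_norm, hRs] using this
        have hδy : ‖z₀ - y‖ ≤ δ := by
          rw [Metric.mem_ball, dist_eq_norm] at hy
          rw [← norm_neg]
          simpa [neg_sub] using hy.le
        have h1 : τ * ⟪x, w⟫ = ⟪y, w⟫ + ⟪z₀ - y, w⟫ := by
          rw [← inner_add_left]
          have : y + (z₀ - y) = z₀ := by abel
          rw [this, hz₀, real_inner_smul_left]
        have h2 : ⟪y, w⟫ = supp (polarBody K) y := by
          rw [real_inner_comm]; exact hiy
        have h3 : |⟪z₀ - y, w⟫| ≤ δ * Rs := by
          have ha := abs_real_inner_le_norm (z₀ - y) w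
          have hb : ‖z₀ - y‖ * ‖w‖ ≤ δ * Rs :=
            mul_le_mul hδy hwb (norm_nonneg _) hδ0.le
          linarith
        have h4 : supp (polarBody K) y ≥ supp (polarBody K) z₀ - Rs * δ := by
          have hl := hlipF z₀ y
          have h5 : Rs * ‖z₀ - y‖ ≤ Rs * δ := mul_le_mul_of_nonneg_left hδy hRs0.le
          linarith
        have h6 : τ * ⟪x, w⟫ ≥ τ * supp (polarBody K) x - 2 * Rs * δ := by
          have := abs_le.1 h3 |>.1
          rw [hFz₀] at h4
          linarith [h1, h2]
      -- δ ≤ τ ε' / (2 Rs)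
        have h7 : δ ≤ τ * ε' / (2 * Rs) := min_le_right _ _
        have h8 : 2 * Rs * δ ≤ τ * ε' := by
          rw [div_eq_mul_inv] at h7
          have := mul_le_mul_of_nonneg_left h7 (by positivity : (0:ℝ) ≤ 2 * Rs)
          calc 2 * Rs * δ ≤ 2 * Rs * (τ * ε' * (2 * Rs)⁻¹) := this
          _ = τ * ε' := by field_simp
        have h9 : τ * ⟪x, w⟫ ≥ τ * (supp (polarBody K) x - ε') := by
          rw [mul_sub]
          linarith
        have h10 : ⟪x, w⟫ ≥ supp (polarBody K) x - ε' :=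
          le_of_mul_le_mul_left (by linarith) hτ0
        rw [hε'] at h10
        linarith
      have hae2 := ENNReal.ae_le_essSup
        (fun y => ENNReal.ofReal ⟪x, gradient (supp (polarBody K)) y⟫) (μ := volume.restrict K)
      have hcomb := (ae_restrict_of_ae (ae_diff_polar hball hε)).and hae2
      rw [Filter.eventually_iff, mem_ae_iff] at hcomb
      have hposball : volume.restrict K (Metric.ball z₀ δ) ≠ 0 := by
        rw [Measure.restrict_apply Metric.isOpen_ball.measurableSet,
          Set.inter_eq_self_of_subset_left hball2]
        exact (Metric.measure_ball_pos volume z₀ hδ0).ne'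
      have hkey : volume.restrict K (Metric.ball z₀ δ ∩
          {y | DifferentiableAt ℝ (supp (polarBody K)) y ∧
            ENNReal.ofReal ⟪x, gradient (supp (polarBody K)) y⟫ ≤ E}) ≠ 0 := by
        rw [measure_inter_conull hcomb]
        exact hposball
      obtain ⟨y, hyball, hyd, hyle⟩ := nonempty_of_measure_ne_zero hkey
      have hclaim : ENNReal.ofReal c ≤ E :=
        (ENNReal.ofReal_le_ofReal (hpoint y hyball hyd)).trans hyle
      have : E < ENNReal.ofReal c := by
        rw [ENNReal.lt_ofReal_iff_toReal_lt hEtop]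
        exact hcE
      exact absurd hclaim this.not_ge

lemma tendsto_rpow_one_div {r : ℝ} (hr : 0 < r) :
    Tendsto (fun p : ℝ => r ^ (1/p)) atTop (𝓝 1) := by
  have h1 : Tendsto (fun p : ℝ => 1/p) atTop (𝓝 0) := by
    simpa [one_div] using tendsto_inv_atTop_zero
  have h2 : Tendsto (fun p : ℝ => Real.log r * (1/p)) atTop (𝓝 0) := by
    simpa using h1.const_mul (Real.log r)
  have h3 := (Real.continuous_exp.tendsto 0).comp h2
  rw [Real.exp_zero] at h3
  refine h3.congr fun p => ?_
  simp only [Function.comp_apply]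
  rw [Real.rpow_def_of_pos hr]

lemma tendsto_Lp (hn : 0 < n) (hK : IsCompact K) (hconv : Convex ℝ K)
    (h0 : (0 : Euc n) ∈ interior K) (hsub : K ⊆ Metric.closedBall 0 R) (hR : 0 ≤ R)
    (hball : Metric.ball 0 ε ⊆ K) (hε : 0 < ε) (x : Euc n) :
    Tendsto (fun p : ℝ => (∫ u, (max ⟪x, u⟫ 0 / supp K u) ^ p ∂(coneVol K)) ^ (1 / p))
      atTop (𝓝 (supp (polarBody K) x)) := by
  have hKne : K.Nonempty := ⟨0, interior_subset h0⟩
  have h0K : (0 : Euc n) ∈ K := interior_subset h0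
  have hsub2 := polar_subset hball hε
  have hpne : (polarBody K).Nonempty := ⟨0, zero_mem_polar⟩
  have haem := aemeas_radialNormal hn hK hconv h0 hsub hball hε
  set S := supp (polarBody K) x with hS
  have hSnonneg : 0 ≤ S := supp_nonneg zero_mem_polar hsub2 x
  set cv := coneVol K with hcv
  -- mass facts
  have hmap : Measure.map (radialNormal K) (volume.restrict K) Set.univ = volume K := by
    rw [Measure.map_apply_of_aemeasurable haem MeasurableSet.univ, Set.preimage_univ,
      Measure.restrict_apply_univ]
  have hcvuniv : cv Set.univ = n * volume K := by
    rw [hcv, coneVol, Measure.smul_apply, hmap, smul_eq_mul]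
  have hvolpos : volume K ≠ 0 := by
    have h1 : volume (Metric.ball (0 : Euc n) ε) ≤ volume K := measure_mono hball
    have h2 := Metric.measure_ball_pos volume (0 : Euc n) hε
    exact fun h => absurd (h ▸ h1) (by simpa using h2.not_ge)
  have hvoltop : volume K ≠ ⊤ := hK.measure_lt_top.ne
  haveI : IsFiniteMeasure cv := ⟨by
    rw [hcvuniv]
    exact ENNReal.mul_lt_top (ENNReal.natCast_ne_top n).lt_top hvoltop.lt_top⟩
  have hm0 : cv Set.univ ≠ 0 := by
    rw [hcvuniv]
    exact mul_ne_zero (by exact_mod_cast hn.ne') hvolpos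
  have hmtop : cv Set.univ ≠ ⊤ := by
    rw [hcvuniv]
    exact (ENNReal.mul_lt_top (ENNReal.natCast_ne_top n).lt_top hvoltop.lt_top).ne
  set m := (cv Set.univ).toReal with hmdef
  have hm : 0 < m := ENNReal.toReal_pos hm0 hmtop
  set g : Euc n → ℝ := fun u => max ⟪x, u⟫ 0 / supp K u with hg
  have hgnonneg : ∀ u, 0 ≤ g u := fun u =>
    div_nonneg (le_max_right _ _) (supp_nonneg h0K hsub u)
  have hgle : ∀ u, g u ≤ S := by
    intro u
    rcases eq_or_ne u 0 with rfl | hu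
    · rw [hg]
      simp [supp_zero_arg hKne, hSnonneg]
    · have hsu : 0 < supp K u := supp_pos_of_ne hsub hball hε hu
      rcases le_or_gt ⟪x, u⟫ 0 with hxu | hxu
      · rw [hg]
        simp only [max_eq_right hxu, zero_div]
        exact hSnonneg
      · have hwmem := smul_mem_polar hsub hsu
        have h1 : ⟪x, (supp K u)⁻¹ • u⟫ ≤ S := le_supp hsub2 hwmem x
        rw [real_inner_smul_right] at h1
        rw [hg]
        simp only [max_eq_left hxu.le]
        rw [div_eq_inv_mul]
        exact h1
  have hgm : Measurable g := by
    have h1 : Continuous fun u : Euc n => max ⟪x, u⟫ 0 :=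
      (continuous_const.inner continuous_id).max continuous_const
    have h2 : Continuous (supp K) := (supp_lipschitz hKne hsub hR).continuous
    exact h1.measurable.div h2.measurable
  have hgpm : ∀ p : ℝ, 0 ≤ p → Measurable (fun u => g u ^ p) := by
    intro p hp
    exact (Real.continuous_rpow_const hp).measurable.comp hgm
  have hInt : ∀ p : ℝ, 0 ≤ p → Integrable (fun u => g u ^ p) cv := by
    intro p hp
    refine (integrable_const (S ^ p)).mono' ((hgpm p hp).aestronglyMeasurable) ?_
    refine ae_of_all _ fun u => ?_
    rw [Real.norm_eq_abs, abs_of_nonneg (Real.rpow_nonneg (hgnonneg u) p)]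
    exact Real.rpow_le_rpow (hgnonneg u) (hgle u) hp
  have hInonneg : ∀ p : ℝ, 0 ≤ ∫ u, g u ^ p ∂cv := fun p =>
    integral_nonneg fun u => Real.rpow_nonneg (hgnonneg u) p
  have hIle : ∀ p : ℝ, 0 ≤ p → (∫ u, g u ^ p ∂cv) ≤ S ^ p * m := by
    intro p hp
    have h1 : (∫ u, g u ^ p ∂cv) ≤ ∫ _u, S ^ p ∂cv :=
      integral_mono (hInt p hp) (integrable_const _)
        (fun u => Real.rpow_le_rpow (hgnonneg u) (hgle u) hp)
    rwa [integral_const, smul_eq_mul, mul_comm] at h1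
  rw [tendsto_order]
  constructor
  · -- lower bounds
    intro b hb
    rcases lt_or_ge b 0 with hb0 | hb0
    · filter_upwards [eventually_gt_atTop (0:ℝ)] with p hp
      exact lt_of_lt_of_le hb0 (Real.rpow_nonneg (hInonneg p) _)
    · have hSpos : 0 < S := lt_of_le_of_lt hb0 hb
      set c := (b + S) / 2 with hc
      have hc0 : 0 < c := by rw [hc]; linarith
      have hcb : b < c := by rw [hc]; linarith
      have hcS : c < S := by rw [hc]; linarith
      set A := {u : Euc n | c < ⟪x, u⟫ / supp K u} with hA
      have hAm : MeasurableSet A := measurableSet_lt measurable_const (measurable_g hKne hsub hR x)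
      have hcvA : cv A ≠ 0 := by
        intro hA0
        have hae : ∀ᵐ u ∂cv, ⟪x, u⟫ / supp K u ≤ c := by
          rw [ae_iff]
          have : {u : Euc n | ¬ ⟪x, u⟫ / supp K u ≤ c} = A := by
            ext u; simp [hA, not_le]
          rwa [this]
        have h1 : essSup (fun u : Euc n => ENNReal.ofReal (⟪x, u⟫ / supp K u)) cv
            ≤ ENNReal.ofReal c := by
          refine essSup_le_of_ae_le _ ?_
          filter_upwards [hae] with u hu
          exact ENNReal.ofReal_le_ofReal hu
        rw [hcv, essSup_eq hn hK hconv h0 hsub hR hball hε x] at h1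
        have h2 : ENNReal.ofReal c < ENNReal.ofReal S :=
          (ENNReal.ofReal_lt_ofReal_iff hSpos).2 hcS
        rw [← hS] at h1
        exact absurd h1 h2.not_ge
      have ha : 0 < (cv A).toReal := ENNReal.toReal_pos hcvA (measure_ne_top cv A)
      set a := (cv A).toReal with hadef
      have honA : ∀ u ∈ A, c ≤ g u := by
        intro u hu
        have hru : c < ⟪x, u⟫ / supp K u := hu
        have hsu : 0 < supp K u := by
          rcases lt_or_eq_of_le (supp_nonneg h0K hsub u) with h | h
          · exact h
          · rw [← h, div_zero] at hru
            linarith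
        have hip : 0 < ⟪x, u⟫ := by
          have h1 : c * supp K u < ⟪x, u⟫ := (lt_div_iff₀ hsu).1 hru
          nlinarith [mul_pos hc0 hsu]
        rw [hg]
        simp only [max_eq_left hip.le]
        exact hru.le
      have hIlow : ∀ p : ℝ, 0 ≤ p → c ^ p * a ≤ ∫ u, g u ^ p ∂cv := by
        intro p hp
        have h1 : ∫ u, A.indicator (fun _ => c ^ p) u ∂cv ≤ ∫ u, g u ^ p ∂cv := by
          refine integral_mono ((integrable_const _).indicator hAm) (hInt p hp) fun u => ?_
          by_cases hu : u ∈ A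
          · rw [Set.indicator_of_mem hu]
            exact Real.rpow_le_rpow hc0.le (honA u hu) hp
          · rw [Set.indicator_of_notMem hu]
            exact Real.rpow_nonneg (hgnonneg u) p
        rwa [integral_indicator_const _ hAm, smul_eq_mul, mul_comm] at h1
      have hconv2 : Tendsto (fun p : ℝ => c * a ^ (1/p)) atTop (𝓝 c) := by
        have := (tendsto_rpow_one_div ha).const_mul c
        simpa using this
      filter_upwards [eventually_gt_atTop (0:ℝ), hconv2.eventually_const_lt hcb] with p hp hcp
      have h1 : (c ^ p * a) ^ (1/p) ≤ (∫ u, g u ^ p ∂cv) ^ (1/p) :=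
        Real.rpow_le_rpow (by positivity) (hIlow p hp.le) (by positivity)
      have h2 : (c ^ p * a) ^ (1/p) = c * a ^ (1/p) := by
        rw [Real.mul_rpow (Real.rpow_nonneg hc0.le p) ha.le, ← Real.rpow_mul hc0.le,
          mul_one_div, div_self hp.ne', Real.rpow_one]
      rw [h2] at h1
      exact lt_of_lt_of_le hcp h1
  · intro b hb
    have hconv2 : Tendsto (fun p : ℝ => S * m ^ (1/p)) atTop (𝓝 S) := by
      have := (tendsto_rpow_one_div hm).const_mul S
      simpa using this
    filter_upwards [eventually_gt_atTop (0:ℝ), hconv2.eventually_lt_const hb] with p hp hSp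
    have h1 : (∫ u, g u ^ p ∂cv) ^ (1/p) ≤ (S ^ p * m) ^ (1/p) :=
      Real.rpow_le_rpow (hInonneg p) (hIle p hp.le) (by positivity)
    have h2 : (S ^ p * m) ^ (1/p) = S * m ^ (1/p) := by
      rw [Real.mul_rpow (Real.rpow_nonneg hSnonneg p) hm.le, ← Real.rpow_mul hSnonneg,
        mul_one_div, div_self hp.ne', Real.rpow_one]
    rw [h2] at h1
    exact lt_of_le_of_lt h1 hSp

end Aux

/-- For a convex body `K` with `o` in its interior: for `x ≠ 0`,
`sup_{‖u‖=1} ⟪x,u⟫/h_K(u) = 1/ρ_K(x) = h_{K*}(x)`; consequently `Π̂_∞⁺K = K*`, i.e.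
`lim_{p→∞} h_{Π̂_p⁺K}(x) = h_{K*}(x)` for all `x`, the limit being the essential supremum
of `u ↦ ⟪x,u⟫/h_K(u)` with respect to the cone-volume measure of `K`. -/
theorem sup_ratio_eq_polar_support (n : ℕ) (K : Set (Euc n)) (hK : IsCompact K)
    (hconv : Convex ℝ K) (h0 : (0 : Euc n) ∈ interior K) :
    (∀ x : Euc n, x ≠ 0 →
      sSup {r : ℝ | ∃ u : Euc n, ‖u‖ = 1 ∧ r = ⟪x, u⟫ / supp K u} = (radial K x)⁻¹ ∧
      (radial K x)⁻¹ = supp (polarBody K) x) ∧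
    (∀ x : Euc n,
      Tendsto (fun p : ℝ => (∫ u, (max ⟪x, u⟫ 0 / supp K u) ^ p ∂(coneVol K)) ^ (1 / p))
        atTop (nhds (supp (polarBody K) x)) ∧
      essSup (fun u : Euc n => ENNReal.ofReal (⟪x, u⟫ / supp K u)) (coneVol K)
        = ENNReal.ofReal (supp (polarBody K) x)) := by
  obtain ⟨ε, hε, hball⟩ := Metric.mem_nhds_iff.1 (mem_interior_iff_mem_nhds.1 h0)
  obtain ⟨R₀, hR₀⟩ := hK.isBounded.subset_closedBall 0
  have hsub : K ⊆ Metric.closedBall 0 (max R₀ 0) :=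
    hR₀.trans (Metric.closedBall_subset_closedBall (le_max_left _ _))
  have hR : 0 ≤ max R₀ 0 := le_max_right _ _
  constructor
  · intro x hx
    exact ⟨Aux.sSup_ratio hK hconv h0 hsub hball hε hx,
      Aux.radial_inv_eq hK hconv h0 hsub hball hε hx⟩
  · intro x
    rcases Nat.eq_zero_or_pos n with rfl | hn
    · haveI : Subsingleton (Euc 0) := ⟨fun a b => by ext i; exact i.elim0⟩
      have hx0 : x = 0 := Subsingleton.elim x 0
      have hcv0 : coneVol K = 0 := by rw [coneVol]; simp
      have hS0 : supp (polarBody K) x = 0 := by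
        rw [hx0]; exact Aux.supp_zero_arg ⟨0, Aux.zero_mem_polar⟩
      constructor
      · rw [hS0]
        refine Tendsto.congr' ?_ (tendsto_const_nhds (α := ℝ) (x := 0))
        filter_upwards [eventually_gt_atTop (0:ℝ)] with p hp
        rw [hcv0, integral_zero_measure, Real.zero_rpow (one_div_ne_zero hp.ne')]
      · rw [hcv0, hS0]
        simp [essSup_measure_zero]
    · exact ⟨Aux.tendsto_Lp hn hK hconv h0 hsub hR hball hε x,
        Aux.essSup_eq hn hK hconv h0 hsub hR hball hε x⟩
end
end
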